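/- arXiv:2407.13347 — 4 statements merged into one kernel-verified Lean document; each statement's English description precedes it below -/
import Mathlib

section
/- For every origin-symmetric convex body Ω ⊂ ℝ^d and every finite set of points p_1,…,p_N in the torus 𝕋^d, one has ∑_{m ∈ Ω ∩ ℤ^d, m ≠ 0} |∑_{j=1}^N exp(2πi m·p_j)|² ≥ 2^{-d}|Ω| N − N². -/
open MeasureTheory
open scoped ENNReal Pointwise ComplexConjugate

/-!
Averaging over `x` in a unit cube the number of points of `x + ℤ^d` lying in `K = Ω / 2` gives an
`x` for which at least `vol K = 2^{-d} |Ω|` of them do; let `A ⊆ ℤ^d` be their lattice parts. By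
convexity and symmetry, the differences of distinct points of `A` are nonzero lattice points of `Ω`.
With `S n = ∑_j e(n · p_j)` and `M` the `A × N` matrix `(e(a · p_j))`, the quantities
`∑_{a,b ∈ A} |S (a - b)|²` and `∑_{j,k} |∑_{a ∈ A} e(a · p_j) conj e(a · p_k)|²` are the squared
Frobenius norms of `M Mᴴ` and `Mᴴ M`, hence equal. The second is at least its diagonal `N |A|²`;
in the first, `b ↦ a - b` is injective for fixed `a`, so it is at most
`|A| (N² + ∑_{0 ≠ n ∈ Ω} |S n|²)`.
-/

theorem MeasureTheory.IsAddFundamentalDomain.exists_measure_le_mul_encard {G α : Type*}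
    [AddGroup G] [Countable G] [AddAction G α] [MeasurableSpace α] {μ : Measure α}
    [MeasurableConstVAdd G α] [VAddInvariantMeasure G α μ] {s t : Set α}
    (h : IsAddFundamentalDomain G s μ) (hs₀ : μ s ≠ 0) (hs : μ s ≠ ∞)
    (ht : MeasurableSet t) (ht' : μ t ≠ ∞) :
    ∃ x, μ t ≤ μ s * {g : G | g +ᵥ x ∈ t}.encard := by
  have hcount : ∀ x, ∑' g : G, t.indicator 1 (g +ᵥ x) = ({g : G | g +ᵥ x ∈ t}.encard : ℝ≥0∞) := by
    intro x
    rw [← ENNReal.tsum_set_one, tsum_subtype _ (fun _ => (1 : ℝ≥0∞))]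
    rfl
  have hμt : μ t = ∫⁻ x in s, ({g : G | g +ᵥ x ∈ t}.encard : ℝ≥0∞) ∂μ := by
    rw [← lintegral_indicator_one ht, h.lintegral_eq_tsum'', ← lintegral_tsum]
    · simp_rw [hcount]
    · exact fun g => ((measurable_one.indicator ht).comp (measurable_const_vadd g)).aemeasurable
  obtain ⟨x, hx⟩ := exists_laverage_le (μ := μ.restrict s) (by simpa using hs₀) (hμt ▸ ht')
  rw [laverage_eq, Measure.restrict_apply_univ, ← hμt, ENNReal.div_le_iff hs₀ hs, mul_comm] at hx
  exact ⟨x, hx⟩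

section IntegerLattice

variable {ι : Type*} [Fintype ι]

theorem mem_span_range_basisFun_iff {v : ι → ℝ} :
    v ∈ Submodule.span ℤ (Set.range (Pi.basisFun ℝ ι)) ↔
      ∃ m : ι → ℤ, (fun i => (m i : ℝ)) = v := by
  simp [Module.Basis.mem_span_iff_repr_mem, funext_iff, Classical.skolem]

theorem finite_setOf_intCast_add_mem {K : Set (ι → ℝ)} (hK : Bornology.IsBounded K)
    (x : ι → ℝ) : {m : ι → ℤ | (fun i => (m i : ℝ)) + x ∈ K}.Finite := by
  have hiso : Isometry fun m : ι → ℤ => (fun i => (m i : ℝ)) + x :=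
    (isometry_add_right x).comp (Isometry.piMap (fun _ => Int.cast) fun _ => Real.isometry_intCast)
  exact (Metric.isCompact_of_isClosed_isBounded (isClosed_discrete _)
    (hiso.antilipschitz.isBounded_preimage hK)).finite_of_discrete

theorem exists_volume_le_card_intCast_add_mem {K : Set (ι → ℝ)} (hK : MeasurableSet K)
    (hKb : Bornology.IsBounded K) :
    ∃ x : ι → ℝ, ∃ A : Finset (ι → ℤ),
      (∀ m ∈ A, (fun i => (m i : ℝ)) + x ∈ K) ∧ volume K ≤ A.card := by
  classical
  set L := (Submodule.span ℤ (Set.range (Pi.basisFun ℝ ι))).toAddSubgroup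
  let c : (ι → ℤ) → L := fun m => ⟨_, mem_span_range_basisFun_iff.2 ⟨m, rfl⟩⟩
  have hc : Function.Injective c := fun m m' h => by simpa [c, funext_iff] using h
  have hc' : Function.Surjective c := fun g => by
    obtain ⟨m, hm⟩ := mem_span_range_basisFun_iff.1 g.2
    exact ⟨m, Subtype.ext hm⟩
  have : Countable L := hc'.countable
  have hvol : volume (ZSpan.fundamentalDomain (Pi.basisFun ℝ ι)) = 1 := by
    simp [ZSpan.fundamentalDomain_pi_basisFun, Real.volume_pi_Ico]
  obtain ⟨x, hx⟩ :=
    (ZSpan.isAddFundamentalDomain' (Pi.basisFun ℝ ι) volume).exists_measure_le_mul_encard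
      (by simp [hvol]) (by simp [hvol]) hK hKb.measure_lt_top.ne
  have hfin := finite_setOf_intCast_add_mem hKb x
  refine ⟨x, hfin.toFinset, fun m hm => hfin.mem_toFinset.1 hm, ?_⟩
  rw [hvol, one_mul,
    ← Set.encard_preimage_of_injective_subset_range hc (by simp [hc'.range_eq])] at hx
  change volume K ≤ ({m : ι → ℤ | (fun i => (m i : ℝ)) + x ∈ K}.encard : ℝ≥0∞) at hx
  rwa [hfin.encard_eq_coe_toFinset_card, ENat.toENNReal_coe] at hx

end IntegerLattice

theorem Convex.sub_mem_of_mem_inv_two_smul {E : Type*} [AddCommGroup E] [Module ℝ E]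
    {s : Set E} (hconv : Convex ℝ s) (hsymm : ∀ x ∈ s, -x ∈ s) {a b : E}
    (ha : a ∈ (2⁻¹ : ℝ) • s) (hb : b ∈ (2⁻¹ : ℝ) • s) : a - b ∈ s := by
  obtain ⟨x, hx, rfl⟩ := ha
  obtain ⟨y, hy, rfl⟩ := hb
  convert hconv hx (hsymm y hy) (by norm_num : (0 : ℝ) ≤ 2⁻¹) (by norm_num : (0 : ℝ) ≤ 2⁻¹)
    (by norm_num) using 1
  simp [sub_eq_add_neg]

theorem sum_sum_norm_sq_sum_mul_conj_comm {α β : Type*} (A : Finset α) (B : Finset β)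
    (g : α → β → ℂ) :
    ∑ a ∈ A, ∑ a' ∈ A, ‖∑ j ∈ B, g a j * conj (g a' j)‖ ^ 2 =
      ∑ j ∈ B, ∑ k ∈ B, ‖∑ a ∈ A, g a j * conj (g a k)‖ ^ 2 := by
  apply Complex.ofReal_injective
  push_cast
  simp only [← Complex.mul_conj', map_sum, map_mul, Complex.conj_conj, Finset.sum_mul_sum,
    ← Finset.sum_product']
  -- both sides sum `g a j * conj (g a' j) * conj (g a k) * g a' k` over all `(a, a', j, k)`
  refine Finset.sum_nbij' (fun x => (x.2.2.1, x.2.2.2, x.1, x.2.1))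
    (fun y => (y.2.2.1, y.2.2.2, y.1, y.2.1)) ?_ ?_ ?_ ?_ fun _ _ => by ring
  all_goals intro; simp_all

namespace AddChar

variable {G ι : Type*} [AddCommGroup G] [Fintype ι] (ψ : ι → AddChar G Circle)

theorem coe_apply_sub_eq_mul_conj (χ : AddChar G Circle) (a b : G) :
    (χ (a - b) : ℂ) = χ a * conj (χ b : ℂ) := by
  rw [map_sub_eq_div, div_eq_mul_inv, Circle.coe_mul, Circle.coe_inv_eq_conj]

theorem card_mul_card_sq_le_sum_sum_norm_sq_sum_apply_sub (A : Finset G) :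
    (Fintype.card ι : ℝ) * A.card ^ 2 ≤ ∑ a ∈ A, ∑ b ∈ A, ‖∑ j, (ψ j (a - b) : ℂ)‖ ^ 2 := by
  simp only [coe_apply_sub_eq_mul_conj]
  rw [sum_sum_norm_sq_sum_mul_conj_comm A Finset.univ fun a j => (ψ j a : ℂ)]
  have hdiag : ∀ j, ‖∑ a ∈ A, (ψ j a : ℂ) * conj (ψ j a : ℂ)‖ ^ 2 = (A.card : ℝ) ^ 2 := by
    simp [Complex.mul_conj', Circle.norm_coe]
  calc (Fintype.card ι : ℝ) * A.card ^ 2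
      = ∑ j, ‖∑ a ∈ A, (ψ j a : ℂ) * conj (ψ j a : ℂ)‖ ^ 2 := by simp [hdiag]
    _ ≤ _ := Finset.sum_le_sum fun j _ =>
      Finset.single_le_sum (f := fun k => ‖∑ a ∈ A, (ψ j a : ℂ) * conj (ψ k a : ℂ)‖ ^ 2)
        (fun _ _ => by positivity) (Finset.mem_univ j)

theorem sum_sum_norm_sq_sum_apply_sub_le {A T : Finset G}
    (hAT : ∀ a ∈ A, ∀ b ∈ A, a ≠ b → a - b ∈ T) :
    ∑ a ∈ A, ∑ b ∈ A, ‖∑ j, (ψ j (a - b) : ℂ)‖ ^ 2 ≤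
      A.card * ((Fintype.card ι : ℝ) ^ 2 + ∑ n ∈ T, ‖∑ j, (ψ j n : ℂ)‖ ^ 2) := by
  classical
  rw [← nsmul_eq_mul, ← Finset.sum_const]
  refine Finset.sum_le_sum fun a ha => ?_
  rw [← Finset.add_sum_erase A _ ha, sub_self]
  gcongr
  · simp
  · rw [← Finset.sum_image (f := fun n => ‖∑ j, (ψ j n : ℂ)‖ ^ 2)
      fun b _ c _ h => sub_right_injective h]
    refine Finset.sum_le_sum_of_subset_of_nonneg ?_ fun _ _ _ => by positivity
    simp only [Finset.subset_iff, Finset.mem_image, Finset.mem_erase]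
    rintro _ ⟨b, ⟨hba, hb⟩, rfl⟩
    exact hAT a ha b hb (Ne.symm hba)

theorem card_mul_card_le_sq_add_sum_norm_sq {A T : Finset G}
    (hAT : ∀ a ∈ A, ∀ b ∈ A, a ≠ b → a - b ∈ T) :
    (Fintype.card ι : ℝ) * A.card ≤
      (Fintype.card ι : ℝ) ^ 2 + ∑ n ∈ T, ‖∑ j, (ψ j n : ℂ)‖ ^ 2 := by
  rcases A.eq_empty_or_nonempty with rfl | hA
  · simp only [Finset.card_empty, Nat.cast_zero, mul_zero]
    positivity
  refine le_of_mul_le_mul_left ?_ (Nat.cast_pos.2 hA.card_pos)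
  calc (A.card : ℝ) * (Fintype.card ι * A.card) = Fintype.card ι * A.card ^ 2 := by ring
    _ ≤ _ := card_mul_card_sq_le_sum_sum_norm_sq_sum_apply_sub ψ A
    _ ≤ _ := sum_sum_norm_sq_sum_apply_sub_le ψ hAT

end AddChar

noncomputable def dotFourierChar {ι : Type*} [Fintype ι] (x : ι → ℝ) :
    AddChar (ι → ℤ) Circle where
  toFun m := Real.fourierChar (∑ i, (m i : ℝ) * x i)
  map_zero_eq_one' := by simp
  map_add_eq_mul' m m' := by
    simp [add_mul, Finset.sum_add_distrib, AddChar.map_add_eq_mul]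

theorem coe_dotFourierChar_apply {ι : Type*} [Fintype ι] (x : ι → ℝ) (m : ι → ℤ) :
    (dotFourierChar x m : ℂ) =
      Complex.exp (2 * Real.pi * Complex.I * ((∑ i, (m i : ℝ) * x i : ℝ) : ℂ)) := by
  rw [dotFourierChar, AddChar.coe_mk, Real.fourierChar_apply]
  push_cast
  ring_nf

theorem cassels_montgomery_general (d N : ℕ) (Ω : Set (Fin d → ℝ))
    (hconv : Convex ℝ Ω) (hcomp : IsCompact Ω)
    (hsymm : ∀ x ∈ Ω, -x ∈ Ω) (p : Fin N → Fin d → ℝ) :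
    ((2 : ℝ) ^ d)⁻¹ * (volume Ω).toReal * N - (N : ℝ) ^ 2 ≤
      ∑ᶠ (m : Fin d → ℤ) (_ : (fun i => (m i : ℝ)) ∈ Ω ∧ m ≠ 0),
        ‖∑ j : Fin N,
          Complex.exp (2 * Real.pi * Complex.I * ((∑ i, (m i : ℝ) * p j i : ℝ) : ℂ))‖ ^ 2 := by
  have hK : IsCompact ((2⁻¹ : ℝ) • Ω) := hcomp.smul _
  obtain ⟨x, A, hA, hvol⟩ := exists_volume_le_card_intCast_add_mem hK.measurableSet hK.isBounded
  have hT : {m : Fin d → ℤ | (fun i => (m i : ℝ)) ∈ Ω ∧ m ≠ 0}.Finite :=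
    (finite_setOf_intCast_add_mem hcomp.isBounded 0).subset fun m hm => by simpa using hm.1
  have hAT : ∀ m ∈ A, ∀ m' ∈ A, m ≠ m' → m - m' ∈ hT.toFinset := fun m hm m' hm' hne => by
    refine hT.mem_toFinset.2 ⟨?_, sub_ne_zero.2 hne⟩
    convert hconv.sub_mem_of_mem_inv_two_smul hsymm (hA m hm) (hA m' hm') using 1
    ext i
    simp
  have hvolK : (volume ((2⁻¹ : ℝ) • Ω)).toReal = ((2 : ℝ) ^ d)⁻¹ * (volume Ω).toReal := by
    simp [Measure.addHaar_smul, inv_pow]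
  have hcard : ((2 : ℝ) ^ d)⁻¹ * (volume Ω).toReal ≤ A.card := by
    simpa [hvolK] using ENNReal.toReal_mono (ENNReal.natCast_ne_top _) hvol
  have hbound := AddChar.card_mul_card_le_sq_add_sum_norm_sq (fun j => dotFourierChar (p j)) hAT
  simp only [coe_dotFourierChar_apply, Fintype.card_fin] at hbound
  refine le_of_le_of_eq ?_ (finsum_mem_eq_finite_toFinset_sum _ hT).symm
  linarith [mul_le_mul_of_nonneg_right hcard (Nat.cast_nonneg (α := ℝ) N)]

/-- **Cassels–Montgomery lemma.** For every origin-symmetric convex body `Ω ⊂ ℝ^d` and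
every finite set of points `p 1, …, p N` in the torus `𝕋^d` (represented by points of `ℝ^d`),
one has `∑_{m ∈ Ω ∩ ℤ^d, m ≠ 0} |∑_j exp(2πi m·p_j)|² ≥ 2^{-d}|Ω| N − N²`. -/
theorem cassels_montgomery (d N : ℕ) (Ω : Set (Fin d → ℝ))
    (hconv : Convex ℝ Ω) (hcomp : IsCompact Ω) (hint : (interior Ω).Nonempty)
    (hsymm : ∀ x ∈ Ω, -x ∈ Ω) (p : Fin N → Fin d → ℝ) :
    ((2 : ℝ) ^ d)⁻¹ * (volume Ω).toReal * N - (N : ℝ) ^ 2 ≤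
      ∑ᶠ (m : Fin d → ℤ) (_ : (fun i => (m i : ℝ)) ∈ Ω ∧ m ≠ 0),
        ‖∑ j : Fin N,
          Complex.exp (2 * Real.pi * Complex.I * ((∑ i, (m i : ℝ) * p j i : ℝ) : ℂ))‖ ^ 2 :=
  cassels_montgomery_general d N Ω hconv hcomp hsymm p
end

section
/- Let ν be a σ-finite positive Borel measure on [0,∞), γ ≥ 0, and C ≥ 0. If limsup_{a→∞} ν([0,a])/a^γ ≤ C, then limsup_{t→0⁺} t^γ ∫_0^∞ e^{−tx} dν(x) ≤ C Γ(γ+1). -/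
/-!
Writing `e^{-tx} = ∫_x^∞ t e^{-ts} ds` and applying Tonelli turns the Laplace transform into
`∫_0^∞ t e^{-ts} ν([0,s)) ds`. Beyond a threshold `A` the hypothesis gives
`ν([0,s)) ≤ c s^γ` for any `c` above the limsup, and `t^γ ∫_0^∞ t e^{-ts} c s^γ ds = c Γ(γ+1)`;
the contribution of `(0, A]` is at most `t^{γ+1} A ν([0,A])`, which vanishes as `t → 0⁺`.
-/

open MeasureTheory Filter Topology Set Real
open scoped ENNReal

lemma ofReal_exp_neg_mul_eq_setLIntegral_Ioi {t : ℝ} (ht : 0 < t) (x : ℝ) :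
    ENNReal.ofReal (exp (-t * x)) = ∫⁻ s in Ioi x, ENNReal.ofReal (t * exp (-t * s)) := by
  rw [← ofReal_integral_eq_lintegral_ofReal ((exp_neg_integrableOn_Ioi x ht).const_mul t)
    (.of_forall fun s => by positivity), integral_const_mul,
    integral_exp_mul_Ioi (neg_lt_zero.2 ht)]
  field_simp

lemma lintegral_exp_neg_mul_eq_lintegral_measure_Iio (ν : Measure ℝ) [SFinite ν] {t : ℝ}
    (ht : 0 < t) :
    ∫⁻ x, ENNReal.ofReal (exp (-t * x)) ∂ν =
      ∫⁻ s, ENNReal.ofReal (t * exp (-t * s)) * ν (Iio s) := by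
  set g : ℝ → ℝ≥0∞ := fun s => ENNReal.ofReal (t * exp (-t * s))
  have hmeas : Measurable (Function.uncurry fun x s : ℝ => (Ioi x).indicator g s) := by
    have hg : Measurable g := by fun_prop
    exact (hg.comp measurable_snd).indicator (measurableSet_lt measurable_fst measurable_snd)
  calc ∫⁻ x, ENNReal.ofReal (exp (-t * x)) ∂ν
      = ∫⁻ x, ∫⁻ s, (Ioi x).indicator g s ∂volume ∂ν := by
        simp_rw [lintegral_indicator measurableSet_Ioi, g,
          ← ofReal_exp_neg_mul_eq_setLIntegral_Ioi ht]
    _ = ∫⁻ s, ∫⁻ x, (Iio s).indicator (fun _ => g s) x ∂ν ∂volume := by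
        rw [lintegral_lintegral_swap hmeas.aemeasurable]
        rfl
    _ = ∫⁻ s, g s * ν (Iio s) := by
        simp_rw [lintegral_indicator measurableSet_Iio, setLIntegral_const]

lemma ofReal_rpow_mul_lintegral_rpow_mul_exp_neg_mul_Ioi {γ t : ℝ} (hγ : -1 < γ) (ht : 0 < t) :
    ENNReal.ofReal (t ^ (γ + 1)) * ∫⁻ s in Ioi 0, ENNReal.ofReal (s ^ γ * exp (-t * s)) =
      ENNReal.ofReal (Gamma (γ + 1)) := by
  have hint : IntegrableOn (fun s : ℝ => s ^ γ * exp (-t * s)) (Ioi 0) := by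
    simpa using integrableOn_rpow_mul_exp_neg_mul_rpow hγ zero_lt_one ht
  have hGamma := integral_rpow_mul_exp_neg_mul_Ioi (a := γ + 1) (by linarith) ht
  simp only [add_sub_cancel_right, ← neg_mul] at hGamma
  rw [← ofReal_integral_eq_lintegral_ofReal hint, hGamma, ← ENNReal.ofReal_mul (by positivity),
    ← mul_assoc, ← mul_rpow ht.le (by positivity), mul_one_div_cancel ht.ne', one_rpow, one_mul]
  filter_upwards [ae_restrict_mem measurableSet_Ioi] with s (hs : 0 < s)
  positivity

lemma measure_Iio_le_indicator_add_indicator {ν : Measure ℝ} (hν : ν (Iio 0) = 0) {γ A : ℝ}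
    {c : ℝ≥0∞} (hbound : ∀ a, A ≤ a → ν (Icc 0 a) ≤ c * ENNReal.ofReal (a ^ γ)) (s : ℝ) :
    ν (Iio s) ≤ (Ioc 0 A).indicator (fun _ => ν (Icc 0 A)) s +
      (Ioi 0).indicator (fun s => c * ENNReal.ofReal (s ^ γ)) s := by
  have hIio : ∀ b, ν (Iio b) ≤ ν (Icc 0 b) := fun b =>
    calc ν (Iio b) ≤ ν (Iio 0 ∪ Icc 0 b) := measure_mono fun x (hx : x < b) => by
            rcases lt_or_ge x 0 with h | h
            exacts [Or.inl h, Or.inr ⟨h, hx.le⟩]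
      _ ≤ ν (Icc 0 b) := by simpa [hν] using measure_union_le (μ := ν) (Iio 0) (Icc 0 b)
  rcases le_or_gt s 0 with hs0 | hs0
  · simp [measure_mono_null (Iio_subset_Iio hs0) hν]
  rcases le_or_gt s A with hsA | hsA
  · rw [indicator_of_mem (show s ∈ Ioc 0 A from ⟨hs0, hsA⟩)]
    exact le_add_right ((hIio s).trans (measure_mono (Icc_subset_Icc_right hsA)))
  · rw [indicator_of_mem (show s ∈ Ioi 0 from hs0)]
    exact le_add_left ((hIio s).trans (hbound s hsA.le))

lemma lintegral_mul_measure_Iio_le {ν : Measure ℝ} (hν : ν (Iio 0) = 0) {γ A t : ℝ} (ht : 0 < t)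
    {c : ℝ≥0∞} (hbound : ∀ a, A ≤ a → ν (Icc 0 a) ≤ c * ENNReal.ofReal (a ^ γ)) :
    ∫⁻ s, ENNReal.ofReal (t * exp (-t * s)) * ν (Iio s) ≤
      ENNReal.ofReal t * ν (Icc 0 A) * ENNReal.ofReal A +
        c * ENNReal.ofReal t * ∫⁻ s in Ioi 0, ENNReal.ofReal (s ^ γ * exp (-t * s)) := by
  set g : ℝ → ℝ≥0∞ := fun s => ENNReal.ofReal (t * exp (-t * s))
  have hg : Measurable g := by fun_prop
  have hg_le : ∀ s, 0 < s → g s ≤ ENNReal.ofReal t := fun s hs =>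
    ENNReal.ofReal_le_ofReal <| mul_le_of_le_one_right ht.le <|
      exp_le_one_iff.2 (by nlinarith)
  have hgc : ∀ s ∈ Ioi (0 : ℝ), g s * (c * ENNReal.ofReal (s ^ γ)) =
      c * ENNReal.ofReal t * ENNReal.ofReal (s ^ γ * exp (-t * s)) := fun s (hs : 0 < s) => by
    simp only [g]
    rw [ENNReal.ofReal_mul ht.le, ENNReal.ofReal_mul (rpow_nonneg hs.le γ)]
    ring
  calc ∫⁻ s, g s * ν (Iio s)
      ≤ ∫⁻ s, (Ioc 0 A).indicator (fun s => g s * ν (Icc 0 A)) s +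
          (Ioi 0).indicator (fun s => g s * (c * ENNReal.ofReal (s ^ γ))) s := by
        refine lintegral_mono fun s => ?_
        rw [indicator_mul_right, indicator_mul_right, ← mul_add]
        gcongr
        exact measure_Iio_le_indicator_add_indicator hν hbound s
    _ = (∫⁻ s in Ioc 0 A, g s * ν (Icc 0 A)) +
          ∫⁻ s in Ioi 0, g s * (c * ENNReal.ofReal (s ^ γ)) := by
        rw [lintegral_add_left ((hg.mul_const _).indicator measurableSet_Ioc),
          lintegral_indicator measurableSet_Ioc, lintegral_indicator measurableSet_Ioi]
    _ ≤ (∫⁻ s in Ioc 0 A, ENNReal.ofReal t * ν (Icc 0 A)) +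
          ∫⁻ s in Ioi 0, c * ENNReal.ofReal t * ENNReal.ofReal (s ^ γ * exp (-t * s)) := by
        gcongr ?_ + ?_
        · exact setLIntegral_mono measurable_const fun s hs => by gcongr; exact hg_le s hs.1
        · exact (setLIntegral_congr_fun measurableSet_Ioi hgc).le
    _ = _ := by
        rw [setLIntegral_const, volume_Ioc, sub_zero, lintegral_const_mul _ (by fun_prop)]

lemma rpow_mul_lintegral_exp_neg_mul_le {ν : Measure ℝ} [SFinite ν] (hν : ν (Iio 0) = 0)
    {γ A t : ℝ} (hγ : -1 < γ) (ht : 0 < t) {c : ℝ≥0∞}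
    (hbound : ∀ a, A ≤ a → ν (Icc 0 a) ≤ c * ENNReal.ofReal (a ^ γ)) :
    ENNReal.ofReal (t ^ γ) * ∫⁻ x, ENNReal.ofReal (exp (-t * x)) ∂ν ≤
      ENNReal.ofReal (t ^ (γ + 1)) * (ν (Icc 0 A) * ENNReal.ofReal A) +
        c * ENNReal.ofReal (Gamma (γ + 1)) := by
  have hpow : ENNReal.ofReal (t ^ γ) * ENNReal.ofReal t = ENNReal.ofReal (t ^ (γ + 1)) := by
    rw [← ENNReal.ofReal_mul (rpow_nonneg ht.le γ), rpow_add_one ht.ne']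
  calc ENNReal.ofReal (t ^ γ) * ∫⁻ x, ENNReal.ofReal (exp (-t * x)) ∂ν
      ≤ ENNReal.ofReal (t ^ γ) * (ENNReal.ofReal t * ν (Icc 0 A) * ENNReal.ofReal A +
          c * ENNReal.ofReal t * ∫⁻ s in Ioi 0, ENNReal.ofReal (s ^ γ * exp (-t * s))) := by
        rw [lintegral_exp_neg_mul_eq_lintegral_measure_Iio ν ht]
        gcongr
        exact lintegral_mul_measure_Iio_le hν ht hbound
    _ = ENNReal.ofReal (t ^ (γ + 1)) * (ν (Icc 0 A) * ENNReal.ofReal A) +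
          c * (ENNReal.ofReal (t ^ (γ + 1)) *
            ∫⁻ s in Ioi 0, ENNReal.ofReal (s ^ γ * exp (-t * s))) := by
        rw [← hpow]
        ring
    _ = _ := by rw [ofReal_rpow_mul_lintegral_rpow_mul_exp_neg_mul_Ioi hγ ht]

lemma limsup_nhdsGT_zero_le_of_le_rpow_mul_add {Φ : ℝ → ℝ≥0∞} {p : ℝ} {K B : ℝ≥0∞}
    (hp : 0 < p) (hK : K ≠ ⊤) (hΦ : ∀ t, 0 < t → Φ t ≤ ENNReal.ofReal (t ^ p) * K + B) :
    limsup Φ (𝓝[>] 0) ≤ B := by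
  have hpow : Tendsto (fun t : ℝ => t ^ p) (𝓝[>] 0) (𝓝 0) := by
    simpa [zero_rpow hp.ne'] using ((continuousAt_id (x := (0 : ℝ))).rpow_const
      (Or.inr hp.le)).tendsto.mono_left nhdsWithin_le_nhds
  have hlim : Tendsto (fun t : ℝ => ENNReal.ofReal (t ^ p) * K + B) (𝓝[>] 0) (𝓝 B) := by
    simpa using (ENNReal.Tendsto.mul_const (ENNReal.tendsto_ofReal hpow) (Or.inr hK)).add_const B
  calc limsup Φ (𝓝[>] 0)
      ≤ limsup (fun t : ℝ => ENNReal.ofReal (t ^ p) * K + B) (𝓝[>] 0) :=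
        limsup_le_limsup (eventually_nhdsWithin_of_forall hΦ)
    _ = B := hlim.limsup_eq

lemma limsup_rpow_mul_lintegral_exp_neg_mul_le_of_eventually_le (ν : Measure ℝ) [SFinite ν]
    (hν : ν (Iio 0) = 0) {γ : ℝ} (hγ : -1 < γ) {c : ℝ≥0∞} (hc : c ≠ ⊤)
    (hbound : ∀ᶠ a in atTop, ν (Icc 0 a) ≤ c * ENNReal.ofReal (a ^ γ)) :
    limsup (fun t : ℝ => ENNReal.ofReal (t ^ γ) * ∫⁻ x, ENNReal.ofReal (exp (-t * x)) ∂ν)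
      (𝓝[>] 0) ≤ c * ENNReal.ofReal (Gamma (γ + 1)) := by
  obtain ⟨A, hA⟩ := eventually_atTop.1 hbound
  have hM : ν (Icc 0 A) ≠ ⊤ :=
    ne_top_of_le_ne_top (ENNReal.mul_ne_top hc ENNReal.ofReal_ne_top) (hA A le_rfl)
  exact limsup_nhdsGT_zero_le_of_le_rpow_mul_add (by linarith)
    (ENNReal.mul_ne_top hM ENNReal.ofReal_ne_top)
    fun t ht => rpow_mul_lintegral_exp_neg_mul_le hν hγ ht hA

lemma limsup_rpow_mul_lintegral_exp_neg_mul_le_limsup_mul_Gamma (ν : Measure ℝ) [SFinite ν]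
    (hν : ν (Iio 0) = 0) {γ : ℝ} (hγ : -1 < γ) :
    limsup (fun t : ℝ => ENNReal.ofReal (t ^ γ) * ∫⁻ x, ENNReal.ofReal (exp (-t * x)) ∂ν)
        (𝓝[>] 0) ≤
      limsup (fun a : ℝ => ν (Icc 0 a) / ENNReal.ofReal (a ^ γ)) atTop *
        ENNReal.ofReal (Gamma (γ + 1)) := by
  have hΓ : ENNReal.ofReal (Gamma (γ + 1)) ≠ 0 :=
    (ENNReal.ofReal_pos.2 (Gamma_pos_of_pos (by linarith))).ne'
  refine le_of_forall_gt_imp_ge_of_dense fun d hd => ?_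
  obtain ⟨c, hc_gt, hc_lt⟩ := exists_between
    ((ENNReal.lt_div_iff_mul_lt (Or.inl hΓ) (Or.inl ENNReal.ofReal_ne_top)).2 hd)
  have hc : c ≠ ⊤ := ne_top_of_lt hc_lt
  refine (limsup_rpow_mul_lintegral_exp_neg_mul_le_of_eventually_le ν hν hγ hc ?_).trans
    (ENNReal.mul_lt_of_lt_div hc_lt).le
  filter_upwards [eventually_lt_of_limsup_lt hc_gt] with a ha
  exact (ENNReal.div_le_iff_le_mul (Or.inr hc) (Or.inl ENNReal.ofReal_ne_top)).1 ha.le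

theorem one_sided_abelian_tauberian_general (ν : Measure ℝ) [SigmaFinite ν]
    (hν : ν (Set.Iio 0) = 0) (γ C : ℝ) (hγ : 0 ≤ γ)
    (h : Filter.limsup (fun a : ℝ => ν (Set.Icc 0 a) / ENNReal.ofReal (a ^ γ)) atTop ≤
      ENNReal.ofReal C) :
    Filter.limsup
        (fun t : ℝ => ENNReal.ofReal (t ^ γ) * ∫⁻ x, ENNReal.ofReal (Real.exp (-t * x)) ∂ν)
        (𝓝[>] 0) ≤
      ENNReal.ofReal (C * Real.Gamma (γ + 1)) := by
  calc _ ≤ limsup (fun a : ℝ => ν (Icc 0 a) / ENNReal.ofReal (a ^ γ)) atTop *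
          ENNReal.ofReal (Gamma (γ + 1)) :=
        limsup_rpow_mul_lintegral_exp_neg_mul_le_limsup_mul_Gamma ν hν (by linarith)
    _ ≤ ENNReal.ofReal C * ENNReal.ofReal (Gamma (γ + 1)) := by gcongr
    _ = ENNReal.ofReal (C * Gamma (γ + 1)) :=
        (ENNReal.ofReal_mul' (Gamma_nonneg_of_nonneg (by linarith))).symm

/-- One-sided Abelian theorem for Laplace transforms of measures: if `ν` is a σ-finite
positive Borel measure on `[0,∞)`, `γ ≥ 0` and `C ≥ 0` satisfy
`limsup_{a→∞} ν([0,a])/a^γ ≤ C`, then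
`limsup_{t→0⁺} t^γ ∫_0^∞ e^{−tx} dν(x) ≤ C Γ(γ+1)`. -/
theorem one_sided_abelian_tauberian (ν : Measure ℝ) [SigmaFinite ν]
    (hν : ν (Set.Iio 0) = 0) (γ C : ℝ) (hγ : 0 ≤ γ) (hC : 0 ≤ C)
    (h : Filter.limsup (fun a : ℝ => ν (Set.Icc 0 a) / ENNReal.ofReal (a ^ γ)) atTop ≤
      ENNReal.ofReal C) :
    Filter.limsup
        (fun t : ℝ => ENNReal.ofReal (t ^ γ) * ∫⁻ x, ENNReal.ofReal (Real.exp (-t * x)) ∂ν)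
        (𝓝[>] 0) ≤
      ENNReal.ofReal (C * Real.Gamma (γ + 1)) :=
  one_sided_abelian_tauberian_general ν hν γ C hγ h
end

section
/- Let ν be a σ-finite positive Borel measure on [0,∞) and γ ≥ 0. Then lim_{t→0⁺} t^γ ∫_0^∞ e^{−tλ} dν(λ) = C if and only if lim_{a→∞} ν([0,a])/a^γ = C/Γ(γ+1). -/
/-!
Abelian direction: by Fubini, `∫ e^{-tx} dν(x) = ∫_0^∞ e^{-u} ν[0, u/t] du`. If
`ν[0, a] ~ c a^γ`, then `t^γ ν[0, u/t] → c u^γ` for each `u > 0`, dominated by `A + M u^γ`, so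
`t^γ ∫ e^{-tx} dν → c ∫_0^∞ e^{-u} u^γ du = c Γ(γ + 1)`.

Tauberian direction (Karamata): evaluating the hypothesis at `k t` gives
`t^γ ∫ p(e^{-tx}) dν → C Λ_γ(p)` for every polynomial `p` with `p(0) = 0`, where
`Λ_γ(Xᵏ) = k^{-γ}`; thus `Λ_γ(p) = Γ(γ)⁻¹ ∫_0^∞ u^{γ-1} p(e^{-u}) du` for `γ > 0` and
`Λ_0(p) = p(1)`. Since `ν[0, 1/t] = ∫ 𝟙_{[e⁻¹, 1]}(e^{-tx}) dν`, squeezing this indicator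
between polynomials (Weierstrass), whose values under `Λ_γ` are close to
`Λ_γ(𝟙_{[e⁻¹, 1]}) = 1 / Γ(γ + 1)`, gives `t^γ ν[0, 1/t] → C / Γ(γ + 1)`.
-/

open MeasureTheory Filter Topology Set
open scoped ENNReal Polynomial

namespace Karamata

variable {ν : Measure ℝ}

lemma ae_nonneg_of_measure_Iio_eq_zero (hν : ν (Iio 0) = 0) : ∀ᵐ x ∂ν, 0 ≤ x :=
  (measure_eq_zero_iff_ae_notMem.1 hν).mono fun _ hx => not_lt.1 hx

lemma measure_Iic_eq_measure_Icc (hν : ν (Iio 0) = 0) (a : ℝ) : ν (Iic a) = ν (Icc 0 a) := by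
  refine le_antisymm ?_ (measure_mono Icc_subset_Iic_self)
  calc ν (Iic a) ≤ ν (Iio 0 ∪ Icc 0 a) := measure_mono fun x hx => by
        rcases lt_or_ge x 0 with h | h
        exacts [Or.inl h, Or.inr ⟨h, hx⟩]
    _ ≤ ν (Icc 0 a) := by simpa [hν] using measure_union_le (μ := ν) (Iio 0) (Icc 0 a)

lemma measure_Iic_eq_zero_of_neg (hν : ν (Iio 0) = 0) {a : ℝ} (ha : a < 0) : ν (Iic a) = 0 :=
  measure_mono_null (Iic_subset_Iio.2 ha) hν

lemma lintegral_Ici_exp_neg (c : ℝ) :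
    ∫⁻ u in Ici c, ENNReal.ofReal (Real.exp (-u)) = ENNReal.ofReal (Real.exp (-c)) := by
  rw [← restrict_Ioi_eq_restrict_Ici, ← integral_exp_neg_Ioi,
    ofReal_integral_eq_lintegral_ofReal
      (by simpa using (exp_neg_integrableOn_Ioi c one_pos).integrable)
      (ae_of_all _ fun _ => (Real.exp_pos _).le)]

lemma lintegral_exp_neg_mul_rpow {γ : ℝ} (hγ : 0 ≤ γ) :
    ∫⁻ u in Ioi 0, ENNReal.ofReal (Real.exp (-u)) * ENNReal.ofReal (u ^ γ) =
      ENNReal.ofReal (Real.Gamma (γ + 1)) := by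
  have hΓ := Real.GammaIntegral_convergent (s := γ + 1) (by linarith)
  simp only [add_sub_cancel_right] at hΓ
  simp_rw [← ENNReal.ofReal_mul (Real.exp_pos _).le]
  rw [← ofReal_integral_eq_lintegral_ofReal hΓ, Real.Gamma_eq_integral (by linarith),
    add_sub_cancel_right]
  exact (ae_restrict_iff' measurableSet_Ioi).2 (ae_of_all _ fun u hu =>
    mul_nonneg (Real.exp_pos _).le (Real.rpow_nonneg (le_of_lt hu) γ))

lemma lintegral_exp_neg_mul_add_mul_rpow_ne_top {γ : ℝ} (hγ : 0 ≤ γ) {A M : ℝ≥0∞}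
    (hA : A ≠ ⊤) (hM : M ≠ ⊤) :
    ∫⁻ u in Ioi 0, ENNReal.ofReal (Real.exp (-u)) * (A + M * ENNReal.ofReal (u ^ γ)) ≠ ⊤ := by
  have hexp : ∫⁻ u in Ioi 0, ENNReal.ofReal (Real.exp (-u)) = 1 := by
    simpa using lintegral_exp_neg_mul_rpow le_rfl
  simp_rw [mul_add, mul_left_comm _ M]
  rw [lintegral_add_right _ ((by fun_prop : Measurable fun u : ℝ =>
      ENNReal.ofReal (Real.exp (-u)) * ENNReal.ofReal (u ^ γ)).const_mul M),
    lintegral_mul_const _ (by fun_prop), lintegral_const_mul _ (by fun_prop), hexp,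
    lintegral_exp_neg_mul_rpow hγ]
  finiteness

noncomputable def laplace (ν : Measure ℝ) (t : ℝ) : ℝ≥0∞ :=
  ∫⁻ x, ENNReal.ofReal (Real.exp (-t * x)) ∂ν

/-- Fubini applied to `e^{-tx} = ∫_{u ≥ tx} e^{-u} du`. -/
lemma laplace_eq_lintegral_exp_neg_mul_measure_Iic [SFinite ν] {t : ℝ} (ht : 0 < t) :
    laplace ν t = ∫⁻ u, ENNReal.ofReal (Real.exp (-u)) * ν (Iic (u / t)) := by
  set f : ℝ × ℝ → ℝ≥0∞ :=
    {p | t * p.1 ≤ p.2}.indicator fun p => ENNReal.ofReal (Real.exp (-p.2))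
  have hf : Measurable f :=
    (by fun_prop : Measurable fun p : ℝ × ℝ => ENNReal.ofReal (Real.exp (-p.2))).indicator
      (measurableSet_le (by fun_prop) (by fun_prop))
  have inner_u : ∀ x, ∫⁻ u, f (x, u) = ENNReal.ofReal (Real.exp (-t * x)) := fun x => by
    rw [neg_mul, ← lintegral_Ici_exp_neg, ← lintegral_indicator measurableSet_Ici]
    rfl
  have inner_x : ∀ u, ∫⁻ x, f (x, u) ∂ν = ENNReal.ofReal (Real.exp (-u)) * ν (Iic (u / t)) :=
    fun u => by
      rw [← lintegral_indicator_const measurableSet_Iic]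
      congr 1 with x
      simp only [f, indicator, mem_ofPred_eq, mem_Iic, le_div_iff₀ ht, mul_comm x t]
  calc laplace ν t = ∫⁻ x, (∫⁻ u, f (x, u)) ∂ν := by simp only [inner_u]; rfl
    _ = ∫⁻ u, ∫⁻ x, f (x, u) ∂ν :=
        lintegral_lintegral_swap (f := fun x u => f (x, u)) hf.aemeasurable
    _ = _ := by simp only [inner_x]

lemma laplace_eq_setLIntegral_Ioi [SFinite ν] (hν : ν (Iio 0) = 0) {t : ℝ} (ht : 0 < t) :
    laplace ν t = ∫⁻ u in Ioi 0, ENNReal.ofReal (Real.exp (-u)) * ν (Iic (u / t)) := by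
  rw [restrict_Ioi_eq_restrict_Ici, setLIntegral_eq_of_support_subset,
    laplace_eq_lintegral_exp_neg_mul_measure_Iic ht]
  intro u hu
  by_contra hu0
  refine hu ?_
  dsimp only
  rw [measure_Iic_eq_zero_of_neg hν (div_neg_of_neg_of_pos (not_le.1 hu0) ht), mul_zero]

lemma exists_le_add_mul_rpow_of_tendsto {F : ℝ → ℝ≥0∞} (hF : Monotone F) {γ : ℝ}
    {ℓ : ℝ≥0∞} (hℓ : ℓ ≠ ⊤)
    (hlim : Tendsto (fun a => F a / ENNReal.ofReal (a ^ γ)) atTop (𝓝 ℓ)) :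
    ∃ A M : ℝ≥0∞, A ≠ ⊤ ∧ M ≠ ⊤ ∧ ∀ a, 0 ≤ a → F a ≤ A + M * ENNReal.ofReal (a ^ γ) := by
  obtain ⟨a₀, ha₀⟩ := eventually_atTop.1 ((hlim.eventually_lt_const
    (ENNReal.lt_add_right hℓ one_ne_zero)).and (eventually_ge_atTop 1))
  have hle : ∀ a ≥ a₀, F a ≤ (ℓ + 1) * ENNReal.ofReal (a ^ γ) := fun a ha => by
    have hpos : 0 < a ^ γ := Real.rpow_pos_of_pos (by linarith [(ha₀ a ha).2]) γ
    exact ((ENNReal.div_lt_iff (Or.inl (by simpa using hpos)) (Or.inl ENNReal.ofReal_ne_top)).1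
      (ha₀ a ha).1).le
  refine ⟨F a₀, ℓ + 1, ne_top_of_le_ne_top (by finiteness) (hle a₀ le_rfl), by finiteness,
    fun a _ => ?_⟩
  rcases le_total a a₀ with h | h
  exacts [le_add_right (hF h), le_add_left (hle a h)]

lemma ofReal_rpow_mul_le_of_le_add_mul_rpow {F : ℝ → ℝ≥0∞} {A M : ℝ≥0∞} {γ : ℝ} (hγ : 0 ≤ γ)
    (hF : ∀ a, 0 ≤ a → F a ≤ A + M * ENNReal.ofReal (a ^ γ)) {t u : ℝ} (ht₀ : 0 < t)
    (ht₁ : t ≤ 1) (hu : 0 ≤ u) :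
    ENNReal.ofReal (t ^ γ) * F (u / t) ≤ A + M * ENNReal.ofReal (u ^ γ) :=
  calc ENNReal.ofReal (t ^ γ) * F (u / t)
      ≤ ENNReal.ofReal (t ^ γ) * (A + M * ENNReal.ofReal ((u / t) ^ γ)) := by
        gcongr; exact hF _ (div_nonneg hu ht₀.le)
    _ = ENNReal.ofReal (t ^ γ) * A + M * ENNReal.ofReal (u ^ γ) := by
        rw [mul_add, mul_left_comm, ← ENNReal.ofReal_mul (Real.rpow_nonneg ht₀.le γ),
          ← Real.mul_rpow ht₀.le (div_nonneg hu ht₀.le), mul_div_cancel₀ _ ht₀.ne']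
    _ ≤ A + M * ENNReal.ofReal (u ^ γ) := by
        gcongr
        exact mul_le_of_le_one_left' (ENNReal.ofReal_le_one.2 (Real.rpow_le_one ht₀.le ht₁ hγ))

lemma tendsto_ofReal_rpow_mul_comp_div {F : ℝ → ℝ≥0∞} {ℓ : ℝ≥0∞} {γ : ℝ}
    (hlim : Tendsto (fun a => F a / ENNReal.ofReal (a ^ γ)) atTop (𝓝 ℓ)) {u : ℝ} (hu : 0 < u) :
    Tendsto (fun t => ENNReal.ofReal (t ^ γ) * F (u / t)) (𝓝[>] 0)
      (𝓝 (ℓ * ENNReal.ofReal (u ^ γ))) := by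
  have hdiv : Tendsto (fun t : ℝ => u / t) (𝓝[>] 0) atTop := by
    simpa only [div_eq_mul_inv] using tendsto_inv_nhdsGT_zero.const_mul_atTop hu
  refine (ENNReal.Tendsto.mul_const (hlim.comp hdiv) (Or.inr ENNReal.ofReal_ne_top)).congr' ?_
  filter_upwards [self_mem_nhdsWithin] with t (ht : 0 < t)
  have hut : 0 < (u / t) ^ γ := Real.rpow_pos_of_pos (div_pos hu ht) γ
  have h : t ^ γ = ((u / t) ^ γ)⁻¹ * u ^ γ := by
    rw [Real.div_rpow hu.le ht.le, inv_div, div_mul_cancel₀ _ (Real.rpow_pos_of_pos hu γ).ne']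
  rw [Function.comp_apply, h, ENNReal.ofReal_mul (inv_nonneg.2 hut.le),
    ENNReal.ofReal_inv_of_pos hut, div_eq_mul_inv]
  ring

lemma monotone_measure_Iic_div {t : ℝ} (ht : 0 < t) : Monotone fun u => ν (Iic (u / t)) :=
  fun _ _ h => measure_mono (Iic_subset_Iic.2 (div_le_div_of_nonneg_right h ht.le))

theorem tendsto_rpow_mul_laplace_of_tendsto [SFinite ν] (hν : ν (Iio 0) = 0) {γ : ℝ}
    (hγ : 0 ≤ γ) {ℓ : ℝ≥0∞} (hℓ : ℓ ≠ ⊤)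
    (hlim : Tendsto (fun a => ν (Iic a) / ENNReal.ofReal (a ^ γ)) atTop (𝓝 ℓ)) :
    Tendsto (fun t => ENNReal.ofReal (t ^ γ) * laplace ν t) (𝓝[>] 0)
      (𝓝 (ℓ * ENNReal.ofReal (Real.Gamma (γ + 1)))) := by
  obtain ⟨A, M, hA, hM, hbound⟩ :=
    exists_le_add_mul_rpow_of_tendsto (fun _ _ h => measure_mono (Iic_subset_Iic.2 h)) hℓ hlim
  have hlimit : ∫⁻ u in Ioi 0, ENNReal.ofReal (Real.exp (-u)) * (ℓ * ENNReal.ofReal (u ^ γ)) =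
      ℓ * ENNReal.ofReal (Real.Gamma (γ + 1)) := by
    simp_rw [mul_left_comm _ ℓ]
    rw [lintegral_const_mul _ (by fun_prop), lintegral_exp_neg_mul_rpow hγ]
  rw [← hlimit]
  refine (tendsto_lintegral_filter_of_dominated_convergence (F := fun t u =>
    ENNReal.ofReal (Real.exp (-u)) * (ENNReal.ofReal (t ^ γ) * ν (Iic (u / t)))) _ ?_ ?_
    (lintegral_exp_neg_mul_add_mul_rpow_ne_top hγ hA hM) ?_).congr' ?_
  · filter_upwards [self_mem_nhdsWithin] with t (ht : 0 < t)
    exact (by fun_prop : Measurable fun u : ℝ => ENNReal.ofReal (Real.exp (-u))).mul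
      ((monotone_measure_Iic_div ht).measurable.const_mul _)
  · filter_upwards [Ioc_mem_nhdsGT one_pos] with t ⟨ht₀, ht₁⟩
    refine (ae_restrict_iff' measurableSet_Ioi).2 (ae_of_all _ fun u (hu : 0 < u) => ?_)
    gcongr
    exact ofReal_rpow_mul_le_of_le_add_mul_rpow hγ hbound ht₀ ht₁ hu.le
  · refine (ae_restrict_iff' measurableSet_Ioi).2 (ae_of_all _ fun u (hu : 0 < u) => ?_)
    exact ENNReal.Tendsto.const_mul (tendsto_ofReal_rpow_mul_comp_div hlim hu)
      (Or.inr ENNReal.ofReal_ne_top)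
  · filter_upwards [self_mem_nhdsWithin] with t (ht : 0 < t)
    rw [laplace_eq_setLIntegral_Ioi hν ht, ← lintegral_const_mul' _ _ ENNReal.ofReal_ne_top]
    simp_rw [mul_left_comm (ENNReal.ofReal (t ^ γ))]

lemma laplace_antitone (hν : ν (Iio 0) = 0) : Antitone (laplace ν) := fun _ _ h =>
  lintegral_mono_ae ((ae_nonneg_of_measure_Iio_eq_zero hν).mono fun x hx =>
    ENNReal.ofReal_le_ofReal (Real.exp_le_exp.2 (by nlinarith)))

lemma measure_Iic_ne_top_of_laplace_ne_top {t : ℝ} (ht : 0 ≤ t) (h : laplace ν t ≠ ⊤) (a : ℝ) :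
    ν (Iic a) ≠ ⊤ := by
  have hle : ν (Iic a) * ENNReal.ofReal (Real.exp (-t * a)) ≤ laplace ν t := by
    rw [mul_comm, ← setLIntegral_const, laplace]
    refine (setLIntegral_mono (by fun_prop) fun x (hx : x ≤ a) => ?_).trans
      (setLIntegral_le_lintegral _ _)
    exact ENNReal.ofReal_le_ofReal (Real.exp_le_exp.2 (by nlinarith))
  exact fun htop => h (top_le_iff.1 (by
    rwa [htop, ENNReal.top_mul (by simp [Real.exp_pos])] at hle))

lemma laplace_ne_top_of_tendsto (hν : ν (Iio 0) = 0) {γ : ℝ} {ℓ : ℝ≥0∞} (hℓ : ℓ ≠ ⊤)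
    (hlim : Tendsto (fun t => ENNReal.ofReal (t ^ γ) * laplace ν t) (𝓝[>] 0) (𝓝 ℓ))
    {t : ℝ} (ht : 0 < t) : laplace ν t ≠ ⊤ := by
  obtain ⟨s, hs, hst⟩ := ((hlim.eventually_lt_const (ENNReal.lt_add_right hℓ one_ne_zero)).and
    (Ioo_mem_nhdsGT ht)).exists
  have hs_fin : laplace ν s ≠ ⊤ := fun htop => by
    rw [htop, ENNReal.mul_top (by simpa using Real.rpow_pos_of_pos hst.1 γ)] at hs
    exact not_top_lt hs
  exact ne_top_of_le_ne_top hs_fin (laplace_antitone hν hst.2.le)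

lemma integrable_exp_neg_mul {t : ℝ} (h : laplace ν t ≠ ⊤) :
    Integrable (fun x => Real.exp (-t * x)) ν := by
  refine ⟨by fun_prop, ?_⟩
  rw [hasFiniteIntegral_iff_ofReal (ae_of_all _ fun x => (Real.exp_pos _).le)]
  exact h.lt_top

lemma toReal_laplace (t : ℝ) : (laplace ν t).toReal = ∫ x, Real.exp (-t * x) ∂ν := by
  rw [integral_eq_lintegral_of_nonneg_ae (ae_of_all _ fun x => (Real.exp_pos _).le)
    (by fun_prop), laplace]

lemma tendsto_rpow_mul_comp_const_mul {f : ℝ → ℝ} {γ C : ℝ}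
    (hf : Tendsto (fun t => t ^ γ * f t) (𝓝[>] 0) (𝓝 C)) {k : ℝ} (hk : 0 < k) :
    Tendsto (fun t => t ^ γ * f (k * t)) (𝓝[>] 0) (𝓝 (k ^ (-γ) * C)) := by
  have hmul : Tendsto (fun t : ℝ => k * t) (𝓝[>] 0) (𝓝[>] 0) := by
    have h := tendsto_comap (f := fun t : ℝ => k * t) (x := 𝓝[>] 0)
    rwa [comap_mulLeft_nhdsGT_zero hk] at h
  refine ((hf.comp hmul).const_mul (k ^ (-γ))).congr' ?_
  filter_upwards [self_mem_nhdsWithin] with t (ht : 0 < t)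
  rw [Function.comp_apply, ← mul_assoc, Real.mul_rpow hk.le ht.le, ← mul_assoc,
    ← Real.rpow_add hk, neg_add_cancel, Real.rpow_zero, one_mul]

noncomputable def karamataFunctional (γ : ℝ) (p : ℝ[X]) : ℝ :=
  p.sum fun k a => a * (k : ℝ) ^ (-γ)

lemma pos_of_mem_support {p : ℝ[X]} (hp : p.coeff 0 = 0) {k : ℕ} (hk : k ∈ p.support) :
    (0 : ℝ) < k :=
  Nat.cast_pos.2 (Nat.pos_of_ne_zero fun h => Polynomial.mem_support_iff.1 hk (h ▸ hp))

lemma eval_exp_neg (p : ℝ[X]) (s : ℝ) :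
    p.eval (Real.exp (-s)) = ∑ k ∈ p.support, p.coeff k * Real.exp (-(k * s)) := by
  rw [Polynomial.eval_eq_sum, Polynomial.sum_def]
  exact Finset.sum_congr rfl fun k _ => by rw [← Real.exp_nat_mul, mul_neg]

lemma eval_exp_neg_mul (p : ℝ[X]) (t x : ℝ) :
    p.eval (Real.exp (-t * x)) = ∑ k ∈ p.support, p.coeff k * Real.exp (-(k * t) * x) := by
  rw [neg_mul, eval_exp_neg]
  exact Finset.sum_congr rfl fun k _ => by ring_nf

lemma integrable_eval_exp_neg_mul (hint : ∀ t > 0, Integrable (fun x => Real.exp (-t * x)) ν)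
    {p : ℝ[X]} (hp : p.coeff 0 = 0) {t : ℝ} (ht : 0 < t) :
    Integrable (fun x => p.eval (Real.exp (-t * x))) ν := by
  simp_rw [eval_exp_neg_mul]
  exact integrable_finsetSum _ fun k hk =>
    (hint _ (mul_pos (pos_of_mem_support hp hk) ht)).const_mul _

lemma tendsto_rpow_mul_integral_eval_exp
    (hint : ∀ t > 0, Integrable (fun x => Real.exp (-t * x)) ν) {γ C : ℝ}
    (hlim : Tendsto (fun t => t ^ γ * ∫ x, Real.exp (-t * x) ∂ν) (𝓝[>] 0) (𝓝 C))
    {p : ℝ[X]} (hp : p.coeff 0 = 0) :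
    Tendsto (fun t => t ^ γ * ∫ x, p.eval (Real.exp (-t * x)) ∂ν) (𝓝[>] 0)
      (𝓝 (C * karamataFunctional γ p)) := by
  have hsum := tendsto_finsetSum p.support fun k hk =>
    (tendsto_rpow_mul_comp_const_mul hlim (pos_of_mem_support hp hk)).const_mul (p.coeff k)
  rw [karamataFunctional, Polynomial.sum_def, Finset.mul_sum, Finset.sum_congr rfl fun k _ =>
    (by ring : C * (p.coeff k * (k : ℝ) ^ (-γ)) = p.coeff k * ((k : ℝ) ^ (-γ) * C))]
  refine hsum.congr' ?_
  filter_upwards [self_mem_nhdsWithin] with t (ht : 0 < t)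
  simp_rw [eval_exp_neg_mul]
  rw [integral_finsetSum _ fun k hk =>
    (hint _ (mul_pos (pos_of_mem_support hp hk) ht)).const_mul _, Finset.mul_sum]
  simp_rw [integral_const_mul, mul_left_comm (t ^ γ)]

lemma karamataFunctional_zero (p : ℝ[X]) : karamataFunctional 0 p = p.eval 1 := by
  simp [karamataFunctional, Polynomial.eval_eq_sum]

lemma karamataFunctional_neg (γ : ℝ) (p : ℝ[X]) :
    karamataFunctional γ (-p) = -karamataFunctional γ p := by
  simp [karamataFunctional, Polynomial.sum_def, Polynomial.support_neg, neg_mul]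

lemma integrableOn_rpow_mul_exp_neg_mul {γ r : ℝ} (hγ : 0 < γ) (hr : 0 < r) :
    IntegrableOn (fun u => u ^ (γ - 1) * Real.exp (-(r * u))) (Ioi 0) := by
  simpa [neg_mul] using integrableOn_rpow_mul_exp_neg_mul_rpow (p := 1) (by linarith) one_pos hr

lemma integrableOn_rpow_mul_eval_exp_neg {γ : ℝ} (hγ : 0 < γ) {p : ℝ[X]} (hp : p.coeff 0 = 0) :
    IntegrableOn (fun u => u ^ (γ - 1) * p.eval (Real.exp (-u))) (Ioi 0) := by
  simp_rw [eval_exp_neg, Finset.mul_sum, mul_left_comm _ (p.coeff _)]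
  exact integrable_finsetSum _ fun k hk =>
    (integrableOn_rpow_mul_exp_neg_mul hγ (pos_of_mem_support hp hk)).const_mul _

lemma karamataFunctional_eq_integral {γ : ℝ} (hγ : 0 < γ) {p : ℝ[X]} (hp : p.coeff 0 = 0) :
    karamataFunctional γ p =
      (Real.Gamma γ)⁻¹ * ∫ u in Ioi 0, u ^ (γ - 1) * p.eval (Real.exp (-u)) := by
  simp_rw [eval_exp_neg, Finset.mul_sum, mul_left_comm _ (p.coeff _)]
  rw [integral_finsetSum _ fun k hk =>
    (integrableOn_rpow_mul_exp_neg_mul hγ (pos_of_mem_support hp hk)).const_mul _,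
    karamataFunctional, Polynomial.sum_def, Finset.mul_sum]
  refine Finset.sum_congr rfl fun k hk => ?_
  have hk := pos_of_mem_support hp hk
  rw [integral_const_mul, Real.integral_rpow_mul_exp_neg_mul_Ioi hγ hk, one_div,
    Real.inv_rpow hk.le, ← Real.rpow_neg hk.le]
  field_simp [(Real.Gamma_pos_of_pos hγ).ne']

lemma integral_rpow_sub_one_Ioc {γ w : ℝ} (hγ : 0 < γ) (hw : 0 ≤ w) :
    ∫ u in Ioc 0 w, u ^ (γ - 1) = w ^ γ / γ := by
  rw [← intervalIntegral.integral_of_le hw, integral_rpow (Or.inl (by linarith)),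
    sub_add_cancel, Real.zero_rpow hγ.ne', sub_zero]

lemma integrableOn_and_integral_rpow_mul_indicator_add_exp {γ w : ℝ} (hγ : 0 < γ) (hw : 0 ≤ w)
    (c K : ℝ) :
    IntegrableOn (fun u => u ^ (γ - 1) * (c * (Ioc 0 w).indicator 1 u + K * Real.exp (-u)))
        (Ioi 0) ∧
      ∫ u in Ioi 0, u ^ (γ - 1) * (c * (Ioc 0 w).indicator 1 u + K * Real.exp (-u)) =
        c * (w ^ γ / γ) + K * Real.Gamma γ := by
  have hsplit : (fun u => u ^ (γ - 1) * (c * (Ioc 0 w).indicator 1 u + K * Real.exp (-u))) =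
      fun u => c * (Ioc 0 w).indicator (fun u => u ^ (γ - 1)) u +
        K * (u ^ (γ - 1) * Real.exp (-u)) := by
    ext u
    simp only [indicator, Pi.one_apply]
    split_ifs <;> ring
  have hind : Integrable (fun u => (Ioc 0 w).indicator (fun u => u ^ (γ - 1)) u)
      (volume.restrict (Ioi 0)) :=
    (integrable_indicator_iff measurableSet_Ioc).2
      ((intervalIntegral.intervalIntegrable_rpow' (by linarith)).1.mono_measure
        Measure.restrict_le_self)
  have hexp : IntegrableOn (fun u => u ^ (γ - 1) * Real.exp (-u)) (Ioi 0) := by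
    simpa using integrableOn_rpow_mul_exp_neg_mul hγ one_pos
  rw [hsplit]
  refine ⟨(hind.const_mul c).add (hexp.const_mul K), ?_⟩
  rw [integral_add (hind.const_mul c) (hexp.const_mul K), integral_const_mul,
    integral_const_mul, integral_indicator measurableSet_Ioc,
    Measure.restrict_restrict measurableSet_Ioc, inter_eq_left.2 Ioc_subset_Ioi_self,
    integral_rpow_sub_one_Ioc hγ hw, Real.Gamma_eq_integral hγ]
  simp_rw [mul_comm (Real.exp _)]

lemma karamataFunctional_le {γ w c K : ℝ} (hγ : 0 ≤ γ) (hw : 0 ≤ w) {p : ℝ[X]}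
    (hp : p.coeff 0 = 0) (hp_one : p.eval 1 ≤ c + K)
    (hp_le : ∀ u > 0,
      p.eval (Real.exp (-u)) ≤ c * (Ioc 0 w).indicator 1 u + K * Real.exp (-u)) :
    karamataFunctional γ p ≤ c * w ^ γ / Real.Gamma (γ + 1) + K := by
  rcases hγ.eq_or_lt with rfl | hγ
  · simpa [karamataFunctional_zero] using hp_one
  obtain ⟨hint, hval⟩ := integrableOn_and_integral_rpow_mul_indicator_add_exp hγ hw c K
  calc karamataFunctional γ p
      = (Real.Gamma γ)⁻¹ * ∫ u in Ioi 0, u ^ (γ - 1) * p.eval (Real.exp (-u)) :=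
        karamataFunctional_eq_integral hγ hp
    _ ≤ (Real.Gamma γ)⁻¹ * (c * (w ^ γ / γ) + K * Real.Gamma γ) := by
        rw [← hval]
        refine mul_le_mul_of_nonneg_left (setIntegral_mono_on
          (integrableOn_rpow_mul_eval_exp_neg hγ hp) hint measurableSet_Ioi fun u hu => ?_)
          (inv_nonneg.2 (Real.Gamma_pos_of_pos hγ).le)
        exact mul_le_mul_of_nonneg_left (hp_le u hu) (Real.rpow_nonneg (le_of_lt hu) _)
    _ = c * w ^ γ / Real.Gamma (γ + 1) + K := by
        rw [Real.Gamma_add_one hγ.ne']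
        field_simp [(Real.Gamma_pos_of_pos hγ).ne']

lemma le_karamataFunctional {γ w c K : ℝ} (hγ : 0 ≤ γ) (hw : 0 ≤ w) {p : ℝ[X]}
    (hp : p.coeff 0 = 0) (hp_one : c - K ≤ p.eval 1)
    (hp_ge : ∀ u > 0,
      c * (Ioc 0 w).indicator 1 u - K * Real.exp (-u) ≤ p.eval (Real.exp (-u))) :
    c * w ^ γ / Real.Gamma (γ + 1) - K ≤ karamataFunctional γ p := by
  have h := karamataFunctional_le (c := -c) (K := K) hγ hw (p := -p) (by simp [hp])
    (by simp only [Polynomial.eval_neg]; linarith) fun u hu => by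
      simp only [Polynomial.eval_neg]; linarith [hp_ge u hu]
  rw [karamataFunctional_neg, neg_mul, neg_div] at h
  linarith

/-- Taking `p = X q` makes `p(0) = 0`, and its error `δ y` costs only `δ` under `Λ_γ`, since
`Λ_γ(X) = 1`. -/
lemma exists_poly_near_mul {g : ℝ → ℝ} (hg : Continuous g) {δ : ℝ} (hδ : 0 < δ) :
    ∃ p : ℝ[X], p.coeff 0 = 0 ∧ ∀ y ∈ Icc (0 : ℝ) 1, |p.eval y - y * g y| ≤ δ * y := by
  obtain ⟨q, hq⟩ := exists_polynomial_near_of_continuousOn 0 1 g hg.continuousOn δ hδ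
  refine ⟨Polynomial.X * q, by simp, fun y hy => ?_⟩
  rw [Polynomial.eval_mul, Polynomial.eval_X, ← mul_sub, abs_mul, abs_of_nonneg hy.1, mul_comm δ]
  exact mul_le_mul_of_nonneg_left (hq y hy).le hy.1

lemma indicator_one_le_indicator_one {α β : Type*} {s : Set α} {t : Set β} {x : α} {y : β}
    (h : x ∈ s → y ∈ t) : s.indicator (1 : α → ℝ) x ≤ t.indicator 1 y := by
  by_cases hx : x ∈ s
  · simp [hx, h hx]
  · simp only [indicator_of_notMem hx]
    exact indicator_nonneg (fun _ _ => zero_le_one) y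

noncomputable def ramp (a b y : ℝ) : ℝ := max 0 (min 1 ((y - a) / (b - a)))

section ramp

variable {a b : ℝ}

lemma continuous_ramp (a b : ℝ) : Continuous (ramp a b) := by
  unfold ramp; fun_prop

lemma ramp_le_one (a b y : ℝ) : ramp a b y ≤ 1 :=
  max_le zero_le_one (min_le_left _ _)

lemma indicator_Ici_le_ramp (hab : a < b) (y : ℝ) : (Ici b).indicator 1 y ≤ ramp a b y := by
  by_cases hy : y ∈ Ici b
  · rw [indicator_of_mem hy, Pi.one_apply, ramp,
      min_eq_left ((one_le_div (sub_pos.2 hab)).2 (by linarith [mem_Ici.1 hy]))]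
    exact le_max_right _ _
  · rw [indicator_of_notMem hy]
    exact le_max_left _ _

lemma ramp_le_indicator_Ioi (hab : a < b) (y : ℝ) : ramp a b y ≤ (Ioi a).indicator 1 y := by
  by_cases hy : y ∈ Ioi a
  · rw [indicator_of_mem hy, Pi.one_apply]
    exact ramp_le_one a b y
  · rw [indicator_of_notMem hy]
    exact max_le le_rfl ((min_le_right _ _).trans (div_nonpos_of_nonpos_of_nonneg
      (by linarith [not_lt.1 (mt mem_Ioi.2 hy)]) (sub_pos.2 hab).le))

lemma ramp_eq_mul_div_max (ha : 0 < a) (hab : a < b) (y : ℝ) :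
    ramp a b y = y * (ramp a b y / max y a) := by
  rcases le_or_gt y a with h | h
  · have h0 : ramp a b y = 0 :=
      le_antisymm (by simpa [h.not_gt] using ramp_le_indicator_Ioi hab y) (le_max_left _ _)
    simp [h0]
  · rw [max_eq_left h.le, mul_div_cancel₀ _ (ha.trans h).ne']

lemma exists_poly_near_ramp (ha : 0 < a) (hab : a < b) (s : ℝ) {δ : ℝ} (hδ : 0 < δ) :
    ∃ p : ℝ[X], p.coeff 0 = 0 ∧
      ∀ y ∈ Icc (0 : ℝ) 1, |p.eval y - (ramp a b y + s * y)| ≤ δ * y := by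
  have hg : Continuous fun y => ramp a b y / max y a + s :=
    ((continuous_ramp a b).div (by fun_prop) fun y => (lt_max_of_lt_right ha).ne').add
      continuous_const
  obtain ⟨p, hp, hpg⟩ := exists_poly_near_mul hg hδ
  refine ⟨p, hp, fun y hy => ?_⟩
  rw [ramp_eq_mul_div_max ha hab]
  simpa [mul_add, mul_comm s] using hpg y hy

end ramp

lemma exists_poly_ge_indicator {γ ε : ℝ} (hγ : 0 ≤ γ) (hε : 0 < ε) :
    ∃ p : ℝ[X], p.coeff 0 = 0 ∧
      (∀ y ∈ Icc (0 : ℝ) 1, (Ici (Real.exp (-1))).indicator 1 y ≤ p.eval y) ∧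
      karamataFunctional γ p ≤ 1 / Real.Gamma (γ + 1) + ε := by
  have hcont : Tendsto (fun w : ℝ => w ^ γ / Real.Gamma (γ + 1)) (𝓝[>] 1)
      (𝓝 (1 / Real.Gamma (γ + 1))) := by
    simpa using ((Real.continuousAt_rpow_const 1 γ (Or.inl one_ne_zero)).tendsto.div_const
      _).mono_left nhdsWithin_le_nhds
  obtain ⟨w, hw, hw1 : 1 < w⟩ := ((hcont.eventually (gt_mem_nhds
    (lt_add_of_pos_right _ (half_pos hε)))).and self_mem_nhdsWithin).exists
  have hab : Real.exp (-w) < Real.exp (-1) := Real.exp_lt_exp.2 (by linarith)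
  obtain ⟨p, hp, hpr⟩ :=
    exists_poly_near_ramp (Real.exp_pos _) hab (ε / 4) (δ := ε / 4) (by positivity)
  have hp_le : ∀ y ∈ Icc (0 : ℝ) 1,
      ramp (Real.exp (-w)) (Real.exp (-1)) y ≤ p.eval y ∧
        p.eval y ≤ ramp (Real.exp (-w)) (Real.exp (-1)) y + ε / 2 * y := fun y hy => by
    have := abs_le.1 (hpr y hy)
    constructor <;> linarith
  refine ⟨p, hp, fun y hy => (indicator_Ici_le_ramp hab y).trans (hp_le y hy).1, ?_⟩
  have := karamataFunctional_le (w := w) (c := 1) (K := ε / 2) hγ (by linarith) hp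
    (by linarith [(hp_le 1 ⟨zero_le_one, le_rfl⟩).2, ramp_le_one (Real.exp (-w)) (Real.exp (-1)) 1])
    fun u hu => by
      have hu1 : Real.exp (-u) ≤ 1 := Real.exp_le_one_iff.2 (by linarith)
      refine (hp_le _ ⟨(Real.exp_pos _).le, hu1⟩).2.trans (add_le_add ?_ le_rfl)
      rw [one_mul]
      exact (ramp_le_indicator_Ioi hab _).trans (indicator_one_le_indicator_one fun h =>
        ⟨hu, by linarith [Real.exp_lt_exp.1 (mem_Ioi.1 h)]⟩)
  rw [one_mul] at this
  linarith

lemma exists_poly_le_indicator {γ ε : ℝ} (hγ : 0 ≤ γ) (hε : 0 < ε) :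
    ∃ p : ℝ[X], p.coeff 0 = 0 ∧
      (∀ y ∈ Icc (0 : ℝ) 1, p.eval y ≤ (Ici (Real.exp (-1))).indicator 1 y) ∧
      1 / Real.Gamma (γ + 1) - ε ≤ karamataFunctional γ p := by
  have hcont : Tendsto (fun v : ℝ => v ^ γ / Real.Gamma (γ + 1)) (𝓝[<] 1)
      (𝓝 (1 / Real.Gamma (γ + 1))) := by
    simpa using ((Real.continuousAt_rpow_const 1 γ (Or.inl one_ne_zero)).tendsto.div_const
      _).mono_left nhdsWithin_le_nhds
  obtain ⟨v, hv, hv0, hv1⟩ := ((hcont.eventually (lt_mem_nhds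
    (sub_lt_self _ (half_pos hε)))).and (Ioo_mem_nhdsLT one_pos)).exists
  have hab : Real.exp (-1) < Real.exp (-v) := Real.exp_lt_exp.2 (by linarith)
  obtain ⟨p, hp, hpr⟩ :=
    exists_poly_near_ramp (Real.exp_pos _) hab (-(ε / 4)) (δ := ε / 4) (by positivity)
  have hp_ge : ∀ y ∈ Icc (0 : ℝ) 1,
      p.eval y ≤ ramp (Real.exp (-1)) (Real.exp (-v)) y ∧
        ramp (Real.exp (-1)) (Real.exp (-v)) y - ε / 2 * y ≤ p.eval y := fun y hy => by
    have := abs_le.1 (hpr y hy)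
    constructor <;> linarith
  refine ⟨p, hp, fun y hy => (hp_ge y hy).1.trans ((ramp_le_indicator_Ioi hab y).trans
    (indicator_one_le_indicator_one fun h => Ioi_subset_Ici_self h)), ?_⟩
  have hramp : ∀ u, (Ioc 0 v).indicator 1 u ≤
      ramp (Real.exp (-1)) (Real.exp (-v)) (Real.exp (-u)) := fun u =>
    (indicator_one_le_indicator_one fun h => Real.exp_le_exp.2 (neg_le_neg h.2)).trans
      (indicator_Ici_le_ramp hab _)
  have hramp_one := indicator_Ici_le_ramp hab 1
  rw [indicator_of_mem (mem_Ici.2 (Real.exp_le_one_iff.2 (by linarith))), Pi.one_apply]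
    at hramp_one
  have := le_karamataFunctional (w := v) (c := 1) (K := ε / 2) hγ hv0.le hp
    (by linarith [(hp_ge 1 ⟨zero_le_one, le_rfl⟩).2]) fun u hu => by
      have hu1 : Real.exp (-u) ≤ 1 := Real.exp_le_one_iff.2 (by linarith)
      linarith [(hp_ge _ ⟨(Real.exp_pos _).le, hu1⟩).2, hramp u]
  rw [one_mul] at this
  linarith

lemma indicator_Ici_exp_neg_mul {t : ℝ} (ht : 0 < t) (x : ℝ) :
    (Ici (Real.exp (-1))).indicator (1 : ℝ → ℝ) (Real.exp (-t * x)) =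
      (Iic t⁻¹).indicator 1 x := by
  have h : Real.exp (-1) ≤ Real.exp (-t * x) ↔ x ≤ t⁻¹ := by
    rw [Real.exp_le_exp, neg_mul, neg_le_neg_iff, inv_eq_one_div, le_div_iff₀ ht, mul_comm]
  simp only [indicator, mem_Ici, mem_Iic, h, Pi.one_apply]

lemma integrable_indicator_Ici_exp_neg_mul {t : ℝ} (ht : 0 < t) (hfin : ν (Iic t⁻¹) ≠ ⊤) :
    Integrable (fun x => (Ici (Real.exp (-1))).indicator (1 : ℝ → ℝ) (Real.exp (-t * x))) ν := by
  simp_rw [indicator_Ici_exp_neg_mul ht]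
  exact (integrable_indicator_iff measurableSet_Iic).2 (integrableOn_const hfin)

lemma measureReal_Iic_inv_eq_integral {t : ℝ} (ht : 0 < t) :
    ν.real (Iic t⁻¹) =
      ∫ x, (Ici (Real.exp (-1))).indicator (1 : ℝ → ℝ) (Real.exp (-t * x)) ∂ν := by
  simp_rw [indicator_Ici_exp_neg_mul ht, integral_indicator_one measurableSet_Iic]

lemma integral_comp_exp_neg_mul_mono (hν : ν (Iio 0) = 0) {t : ℝ} (ht : 0 ≤ t) {φ ψ : ℝ → ℝ}
    (hφ : Integrable (fun x => φ (Real.exp (-t * x))) ν)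
    (hψ : Integrable (fun x => ψ (Real.exp (-t * x))) ν)
    (hle : ∀ y ∈ Icc (0 : ℝ) 1, φ y ≤ ψ y) :
    ∫ x, φ (Real.exp (-t * x)) ∂ν ≤ ∫ x, ψ (Real.exp (-t * x)) ∂ν :=
  integral_mono_ae hφ hψ ((ae_nonneg_of_measure_Iio_eq_zero hν).mono fun x hx =>
    hle _ ⟨(Real.exp_pos _).le, Real.exp_le_one_iff.2 (by nlinarith)⟩)

lemma tendsto_rpow_mul_measureReal_Iic_inv (hν : ν (Iio 0) = 0) {γ C : ℝ} (hγ : 0 ≤ γ)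
    (hC : 0 ≤ C) (hint : ∀ t > 0, Integrable (fun x => Real.exp (-t * x)) ν)
    (hfin : ∀ a, ν (Iic a) ≠ ⊤)
    (hlim : Tendsto (fun t => t ^ γ * ∫ x, Real.exp (-t * x) ∂ν) (𝓝[>] 0) (𝓝 C)) :
    Tendsto (fun t => t ^ γ * ν.real (Iic t⁻¹)) (𝓝[>] 0) (𝓝 (C / Real.Gamma (γ + 1))) := by
  rw [← mul_one_div]
  refine tendsto_order.2 ⟨fun b hb => ?_, fun b hb => ?_⟩
  · obtain ⟨ε, hε, hCε⟩ := exists_pos_mul_lt (sub_pos.2 hb) C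
    obtain ⟨p, hp, hp_le, hΛ⟩ := exists_poly_le_indicator hγ hε
    have hb' : b < C * karamataFunctional γ p := by nlinarith
    filter_upwards [(tendsto_rpow_mul_integral_eval_exp hint hlim hp).eventually
      (lt_mem_nhds hb'), self_mem_nhdsWithin] with t hbt (ht : 0 < t)
    refine hbt.trans_le (mul_le_mul_of_nonneg_left ?_ (Real.rpow_nonneg ht.le γ))
    rw [measureReal_Iic_inv_eq_integral ht]
    exact integral_comp_exp_neg_mul_mono hν ht.le (integrable_eval_exp_neg_mul hint hp ht)
      (integrable_indicator_Ici_exp_neg_mul ht (hfin _)) hp_le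
  · obtain ⟨ε, hε, hCε⟩ := exists_pos_mul_lt (sub_pos.2 hb) C
    obtain ⟨p, hp, hp_ge, hΛ⟩ := exists_poly_ge_indicator hγ hε
    have hb' : C * karamataFunctional γ p < b := by nlinarith
    filter_upwards [(tendsto_rpow_mul_integral_eval_exp hint hlim hp).eventually
      (gt_mem_nhds hb'), self_mem_nhdsWithin] with t hbt (ht : 0 < t)
    refine lt_of_le_of_lt (mul_le_mul_of_nonneg_left ?_ (Real.rpow_nonneg ht.le γ)) hbt
    rw [measureReal_Iic_inv_eq_integral ht]
    exact integral_comp_exp_neg_mul_mono hν ht.le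
      (integrable_indicator_Ici_exp_neg_mul ht (hfin _)) (integrable_eval_exp_neg_mul hint hp ht)
      hp_ge

theorem tendsto_measure_Iic_of_tendsto_laplace (hν : ν (Iio 0) = 0) {γ C : ℝ} (hγ : 0 ≤ γ)
    (hC : 0 ≤ C)
    (hlim : Tendsto (fun t => ENNReal.ofReal (t ^ γ) * laplace ν t) (𝓝[>] 0)
      (𝓝 (ENNReal.ofReal C))) :
    Tendsto (fun a => ν (Iic a) / ENNReal.ofReal (a ^ γ)) atTop
      (𝓝 (ENNReal.ofReal (C / Real.Gamma (γ + 1)))) := by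
  have hlaplace : ∀ t > 0, laplace ν t ≠ ⊤ := fun t ht =>
    laplace_ne_top_of_tendsto hν ENNReal.ofReal_ne_top hlim ht
  have hfin : ∀ a, ν (Iic a) ≠ ⊤ :=
    measure_Iic_ne_top_of_laplace_ne_top zero_le_one (hlaplace 1 one_pos)
  have hreal : Tendsto (fun t => t ^ γ * ∫ x, Real.exp (-t * x) ∂ν) (𝓝[>] 0) (𝓝 C) := by
    have h := (ENNReal.tendsto_toReal ENNReal.ofReal_ne_top).comp hlim
    rw [ENNReal.toReal_ofReal hC] at h
    refine h.congr' ?_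
    filter_upwards [self_mem_nhdsWithin] with t (ht : 0 < t)
    rw [Function.comp_apply, ENNReal.toReal_mul, ENNReal.toReal_ofReal (Real.rpow_nonneg ht.le γ),
      toReal_laplace]
  have hkey := (tendsto_rpow_mul_measureReal_Iic_inv hν hγ hC
    (fun t ht => integrable_exp_neg_mul (hlaplace t ht)) hfin hreal).comp
    tendsto_inv_atTop_nhdsGT_zero
  refine (ENNReal.tendsto_ofReal hkey).congr' ?_
  filter_upwards [eventually_gt_atTop 0] with a ha
  rw [Function.comp_apply, inv_inv, Real.inv_rpow ha.le, inv_mul_eq_div,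
    ENNReal.ofReal_div_of_pos (Real.rpow_pos_of_pos ha γ), measureReal_def,
    ENNReal.ofReal_toReal (hfin a)]

end Karamata

/-- The integral Abelian–Tauberian theorem: for a σ-finite positive Borel measure `ν` on
`[0,∞)` and `γ ≥ 0`, one has `lim_{t→0⁺} t^γ ∫_0^∞ e^{−tλ} dν(λ) = C` if and only if
`lim_{a→∞} ν([0,a])/a^γ = C/Γ(γ+1)`. -/
theorem abelian_tauberian (ν : Measure ℝ) [SigmaFinite ν]
    (hν : ν (Set.Iio 0) = 0) (γ C : ℝ) (hγ : 0 ≤ γ) (hC : 0 ≤ C) :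
    Tendsto
        (fun t : ℝ => ENNReal.ofReal (t ^ γ) * ∫⁻ x, ENNReal.ofReal (Real.exp (-t * x)) ∂ν)
        (𝓝[>] 0) (𝓝 (ENNReal.ofReal C)) ↔
      Tendsto (fun a : ℝ => ν (Set.Icc 0 a) / ENNReal.ofReal (a ^ γ)) atTop
        (𝓝 (ENNReal.ofReal (C / Real.Gamma (γ + 1)))) := by
  simp_rw [← Karamata.measure_Iic_eq_measure_Icc hν]
  refine ⟨Karamata.tendsto_measure_Iic_of_tendsto_laplace hν hγ hC, fun h => ?_⟩
  have hΓ := Real.Gamma_pos_of_pos (by linarith : 0 < γ + 1)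
  have := Karamata.tendsto_rpow_mul_laplace_of_tendsto hν hγ ENNReal.ofReal_ne_top h
  rwa [← ENNReal.ofReal_mul (div_nonneg hC hΓ.le), div_mul_cancel₀ C hΓ.ne'] at this
end

section
/- Suppose u ∈ L²(ℝ^d) and a constant J ≥ 0 satisfy lim_{R→∞} (2π²/R) ∫_{B_R} |ξ|² |û(ξ)|² dξ = J. Then lim_{R→∞} 2π² R ∫_{|ξ| > R} |û(ξ)|² dξ = J. -/
open MeasureTheory Filter Topology FourierTransform Metric
open scoped ENNReal

/-!
Push `|û(ξ)|² dξ` forward under `ξ ↦ |ξ|` to a measure `ν` on `ℝ` and put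
`Φ(R) = ∫_{r < R} r² dν`. For `L > 0`, Tonelli applied to `R⁻³ 𝟙{r < R} r²` on `(L, ∞) × ℝ`
gives the integration by parts
`ν([L, ∞)) = 2 ∫_L^∞ Φ(R) R⁻³ dR - Φ(L) / L²`.
Since `L ∫_L^∞ R⁻² dR = 1`, the average `L ∫_L^∞ (Φ(R)/R) R⁻² dR` tends to `c = lim Φ(R)/R`,
so `L ν([L, ∞)) → 2c - c = c`; the inclusions `[L + 1, ∞) ⊆ (L, ∞) ⊆ [L, ∞)` pass this to
the open tails.
-/

open Set

lemma lintegral_Ioi_rpow_neg_three {a : ℝ} (ha : 0 < a) :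
    ∫⁻ R in Ioi a, ENNReal.ofReal (R ^ (-3 : ℝ)) = ENNReal.ofReal (a ^ (-2 : ℝ) / 2) := by
  rw [← ofReal_integral_eq_lintegral_ofReal (integrableOn_Ioi_rpow_of_lt (by norm_num) ha)
    (ae_restrict_of_forall_mem measurableSet_Ioi fun R hR => Real.rpow_nonneg (ha.trans hR).le _),
    integral_Ioi_rpow_of_lt (by norm_num) ha]
  norm_num

lemma integral_Ioi_rpow_neg_two {a : ℝ} (ha : 0 < a) :
    ∫ R in Ioi a, R ^ (-2 : ℝ) = a⁻¹ := by
  rw [integral_Ioi_rpow_of_lt (by norm_num) ha]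
  norm_num [Real.rpow_neg_one]

noncomputable def truncatedSecondMoment (ν : Measure ℝ) (R : ℝ) : ℝ≥0∞ :=
  ∫⁻ r in Iio R, ENNReal.ofReal (r ^ 2) ∂ν

lemma lintegral_Ioi_rpow_neg_three_mul_truncatedSecondMoment (ν : Measure ℝ) [SFinite ν]
    {L : ℝ} (hL : 0 < L) :
    ∫⁻ R in Ioi L, ENNReal.ofReal (R ^ (-3 : ℝ)) * truncatedSecondMoment ν R =
      ENNReal.ofReal (L ^ (-2 : ℝ) / 2) * truncatedSecondMoment ν L +
        ENNReal.ofReal (1 / 2) * ν (Ici L) := by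
  set k : ℝ → ℝ → ℝ≥0∞ := fun R r => {p : ℝ × ℝ | p.2 < p.1}.indicator
    (fun p => ENNReal.ofReal (p.1 ^ (-3 : ℝ)) * ENNReal.ofReal (p.2 ^ 2)) (R, r)
  have hk : Measurable (Function.uncurry k) :=
    (by fun_prop : Measurable fun p : ℝ × ℝ => _).indicator
      (measurableSet_lt measurable_snd measurable_fst)
  have h_inner (R : ℝ) :
      ENNReal.ofReal (R ^ (-3 : ℝ)) * truncatedSecondMoment ν R = ∫⁻ r, k R r ∂ν := by
    rw [truncatedSecondMoment, ← lintegral_const_mul' _ _ ENNReal.ofReal_ne_top,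
      ← lintegral_indicator measurableSet_Iio]
    rfl
  have h_outer (r : ℝ) :
      ∫⁻ R in Ioi L, k R r = ENNReal.ofReal (max r L ^ (-2 : ℝ) / 2) * ENNReal.ofReal (r ^ 2) := by
    have hk_ind : (fun R => k R r) =
        (Ioi r).indicator (fun R => ENNReal.ofReal (R ^ (-3 : ℝ)) * ENNReal.ofReal (r ^ 2)) := by
      ext R
      by_cases hr : r < R <;> simp [k, hr]
    rw [hk_ind, lintegral_indicator measurableSet_Ioi, Measure.restrict_restrict measurableSet_Ioi,
      Ioi_inter_Ioi, lintegral_mul_const _ (by fun_prop),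
      lintegral_Ioi_rpow_neg_three (hL.trans_le (le_max_right r L))]
  calc ∫⁻ R in Ioi L, ENNReal.ofReal (R ^ (-3 : ℝ)) * truncatedSecondMoment ν R
      = ∫⁻ r, (∫⁻ R in Ioi L, k R r) ∂ν := by
        simp_rw [h_inner]
        exact lintegral_lintegral_swap hk.aemeasurable
    _ = ∫⁻ r in Iio L, ENNReal.ofReal (L ^ (-2 : ℝ) / 2) * ENNReal.ofReal (r ^ 2) ∂ν +
          ∫⁻ r in Ici L, ENNReal.ofReal (1 / 2) ∂ν := by
        simp_rw [h_outer]
        rw [← lintegral_add_compl _ measurableSet_Iio, compl_Iio]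
        congr 1
        · refine setLIntegral_congr_fun measurableSet_Iio fun r hr => ?_
          rw [max_eq_right (le_of_lt hr)]
        · refine setLIntegral_congr_fun measurableSet_Ici fun r hr => ?_
          have hr0 : 0 < r := hL.trans_le hr
          rw [max_eq_left hr, ← ENNReal.ofReal_mul (by positivity), div_mul_eq_mul_div,
            ← Real.rpow_natCast, ← Real.rpow_add hr0]
          norm_num
    _ = _ := by
      rw [lintegral_const_mul _ (by fun_prop), setLIntegral_const]
      rfl

lemma integrableOn_Ioi_rpow_neg_two_mul {h : ℝ → ℝ} {L M : ℝ} (hL : 0 < L) (hh : Measurable h)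
    (hM : ∀ R > L, |h R| ≤ M) : IntegrableOn (fun R => R ^ (-2 : ℝ) * h R) (Ioi L) :=
  (integrableOn_Ioi_rpow_of_lt (by norm_num) hL).mul_bdd hh.aestronglyMeasurable
    (ae_restrict_of_forall_mem measurableSet_Ioi fun R hR => hM R hR)

lemma abs_mul_setIntegral_Ioi_rpow_neg_two_mul_sub_le {h : ℝ → ℝ} {L c ε : ℝ} (hL : 0 < L)
    (hh : Measurable h) (hε : ∀ R > L, |h R - c| ≤ ε) :
    |L * (∫ R in Ioi L, R ^ (-2 : ℝ) * h R) - c| ≤ ε := by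
  have h_int_sub : IntegrableOn (fun R => R ^ (-2 : ℝ) * (h R - c)) (Ioi L) :=
    integrableOn_Ioi_rpow_neg_two_mul hL (hh.sub measurable_const) hε
  have h_int : IntegrableOn (fun R : ℝ => R ^ (-2 : ℝ)) (Ioi L) :=
    integrableOn_Ioi_rpow_of_lt (by norm_num) hL
  have h_split : ∫ R in Ioi L, R ^ (-2 : ℝ) * h R =
      (∫ R in Ioi L, R ^ (-2 : ℝ) * (h R - c)) + c * L⁻¹ := by
    rw [← integral_Ioi_rpow_neg_two hL, ← integral_const_mul,
      ← integral_add h_int_sub (h_int.const_mul c)]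
    congr 1 with R
    ring
  have h_bound : |∫ R in Ioi L, R ^ (-2 : ℝ) * (h R - c)| ≤ ε * L⁻¹ := by
    calc |∫ R in Ioi L, R ^ (-2 : ℝ) * (h R - c)| ≤ ∫ R in Ioi L, R ^ (-2 : ℝ) * ε :=
          (Real.norm_eq_abs _).symm.trans_le (norm_integral_le_of_norm_le (h_int.mul_const ε) ?_)
      _ = ε * L⁻¹ := by rw [integral_mul_const, integral_Ioi_rpow_neg_two hL, mul_comm]
    refine ae_restrict_of_forall_mem measurableSet_Ioi fun R hR => ?_
    have hR0 : 0 < R := hL.trans hR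
    rw [Real.norm_eq_abs, abs_mul, abs_of_pos (Real.rpow_pos_of_pos hR0 _)]
    exact mul_le_mul_of_nonneg_left (hε R hR) (Real.rpow_nonneg hR0.le _)
  calc |L * (∫ R in Ioi L, R ^ (-2 : ℝ) * h R) - c|
      = L * |∫ R in Ioi L, R ^ (-2 : ℝ) * (h R - c)| := by
        rw [h_split, mul_add, mul_left_comm, mul_inv_cancel₀ hL.ne', mul_one, add_sub_cancel_right,
          abs_mul, abs_of_pos hL]
    _ ≤ L * (ε * L⁻¹) := by gcongr
    _ = ε := by field_simp

lemma tendsto_mul_setIntegral_Ioi_rpow_neg_two_mul {h : ℝ → ℝ} {c : ℝ} (hh : Measurable h)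
    (hlim : Tendsto h atTop (𝓝 c)) :
    Tendsto (fun L => L * ∫ R in Ioi L, R ^ (-2 : ℝ) * h R) atTop (𝓝 c) := by
  refine Metric.tendsto_atTop.2 fun ε hε => ?_
  obtain ⟨L₀, hL₀⟩ := Metric.tendsto_atTop.1 hlim (ε / 2) (half_pos hε)
  refine ⟨max L₀ 1, fun L hL => ?_⟩
  rw [Real.dist_eq]
  refine (abs_mul_setIntegral_Ioi_rpow_neg_two_mul_sub_le (zero_lt_one.trans_le
    ((le_max_right _ _).trans hL)) hh fun R hR => ?_).trans_lt (half_lt_self hε)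
  exact (Real.dist_eq _ _ ▸ hL₀ R ((le_max_left _ _).trans (hL.trans hR.le))).le

lemma monotone_truncatedSecondMoment (ν : Measure ℝ) : Monotone (truncatedSecondMoment ν) :=
  fun _ _ hRS => lintegral_mono_set (Iio_subset_Iio hRS)

lemma measure_Ici_ne_top_and_mul_toReal_eq (ν : Measure ℝ) [SFinite ν]
    (hfin : ∀ R, truncatedSecondMoment ν R ≠ ⊤) {L : ℝ} (hL : 0 < L)
    (hint : IntegrableOn (fun R => R ^ (-2 : ℝ) * ((truncatedSecondMoment ν R).toReal / R))
      (Ioi L)) :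
    ν (Ici L) ≠ ⊤ ∧ L * (ν (Ici L)).toReal =
      2 * (L * ∫ R in Ioi L, R ^ (-2 : ℝ) * ((truncatedSecondMoment ν R).toReal / R)) -
        (truncatedSecondMoment ν L).toReal / L := by
  have h_eq : ENNReal.ofReal (L ^ (-2 : ℝ) / 2) * truncatedSecondMoment ν L +
      ENNReal.ofReal (1 / 2) * ν (Ici L) =
      ENNReal.ofReal (∫ R in Ioi L, R ^ (-2 : ℝ) * ((truncatedSecondMoment ν R).toReal / R)) := by
    rw [← lintegral_Ioi_rpow_neg_three_mul_truncatedSecondMoment ν hL,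
      ofReal_integral_eq_lintegral_ofReal hint (ae_restrict_of_forall_mem measurableSet_Ioi
        fun R hR => by have := hL.trans hR; positivity)]
    refine setLIntegral_congr_fun measurableSet_Ioi fun R hR => ?_
    have hR0 : 0 < R := hL.trans hR
    rw [show (-3 : ℝ) = -2 - 1 by norm_num, Real.rpow_sub hR0, Real.rpow_one, mul_div_assoc',
      mul_div_right_comm, ENNReal.ofReal_mul (by positivity), ENNReal.ofReal_toReal (hfin R)]
  have h_top : ν (Ici L) ≠ ⊤ := by
    intro h
    rw [h, ENNReal.mul_top (by norm_num), add_top] at h_eq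
    exact ENNReal.ofReal_ne_top h_eq.symm
  refine ⟨h_top, ?_⟩
  have h_real := congrArg ENNReal.toReal h_eq
  rw [ENNReal.toReal_add (ENNReal.mul_ne_top ENNReal.ofReal_ne_top (hfin L))
      (ENNReal.mul_ne_top ENNReal.ofReal_ne_top h_top), ENNReal.toReal_mul, ENNReal.toReal_mul,
    ENNReal.toReal_ofReal (by positivity), ENNReal.toReal_ofReal (by norm_num),
    ENNReal.toReal_ofReal (setIntegral_nonneg measurableSet_Ioi fun R hR => by
      have := hL.trans hR; positivity), Real.rpow_neg hL.le, Real.rpow_two] at h_real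
  rw [← h_real]
  field_simp
  ring

lemma tendsto_mul_toReal_measure_Ioi_of_Ici (ν : Measure ℝ) {c : ℝ}
    (hfin : ∀ᶠ L in atTop, ν (Ici L) ≠ ⊤)
    (hlim : Tendsto (fun L => L * (ν (Ici L)).toReal) atTop (𝓝 c)) :
    Tendsto (fun L => L * (ν (Ioi L)).toReal) atTop (𝓝 c) := by
  have h_shift : Tendsto (fun L : ℝ => L + 1) atTop atTop :=
    tendsto_atTop_add_const_right _ 1 tendsto_id
  have h_mass : Tendsto (fun L => (ν (Ici (L + 1))).toReal) atTop (𝓝 0) := by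
    have := ((hlim.comp h_shift).mul (tendsto_inv_atTop_zero.comp h_shift))
    rw [mul_zero] at this
    refine this.congr' ((eventually_gt_atTop (-1)).mono fun L hL => ?_)
    simp only [Function.comp_apply]
    have : L + 1 ≠ 0 := by linarith
    field_simp
  have h_lower : Tendsto (fun L => L * (ν (Ici (L + 1))).toReal) atTop (𝓝 c) := by
    have := (hlim.comp h_shift).sub h_mass
    rw [sub_zero] at this
    exact this.congr fun L => by simp only [Function.comp_apply]; ring
  refine tendsto_of_tendsto_of_tendsto_of_le_of_le' h_lower hlim ?_ ?_
  · filter_upwards [hfin, eventually_ge_atTop 0] with L h_top hL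
    exact mul_le_mul_of_nonneg_left (ENNReal.toReal_mono
      (ne_top_of_le_ne_top h_top (measure_mono Ioi_subset_Ici_self))
      (measure_mono (Ici_subset_Ioi.2 (lt_add_one L)))) hL
  · filter_upwards [hfin, eventually_ge_atTop 0] with L h_top hL
    exact mul_le_mul_of_nonneg_left (ENNReal.toReal_mono h_top
      (measure_mono Ioi_subset_Ici_self)) hL

theorem tendsto_mul_toReal_measure_Ioi (ν : Measure ℝ) [SFinite ν] {c : ℝ}
    (hfin : ∀ R, truncatedSecondMoment ν R ≠ ⊤)
    (hlim : Tendsto (fun R => (truncatedSecondMoment ν R).toReal / R) atTop (𝓝 c)) :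
    Tendsto (fun R => R * (ν (Ioi R)).toReal) atTop (𝓝 c) := by
  set h := fun R => (truncatedSecondMoment ν R).toReal / R
  have hh : Measurable h :=
    (Monotone.measurable fun _ _ hRS => ENNReal.toReal_mono (hfin _)
      (monotone_truncatedSecondMoment ν hRS)).div measurable_id
  have h_int : ∀ᶠ L in atTop, IntegrableOn (fun R => R ^ (-2 : ℝ) * h R) (Ioi L) := by
    obtain ⟨L₀, hL₀⟩ := eventually_atTop.1
      (hlim.abs.eventually (gt_mem_nhds (lt_add_one |c|)))
    filter_upwards [eventually_gt_atTop (max L₀ 0)] with L hL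
    exact integrableOn_Ioi_rpow_neg_two_mul ((le_max_right _ _).trans_lt hL) hh
      fun R hR => (hL₀ R ((le_max_left _ _).trans (hL.trans hR).le)).le
  have h_Ici : ∀ᶠ L in atTop, ν (Ici L) ≠ ⊤ ∧
      L * (ν (Ici L)).toReal = 2 * (L * ∫ R in Ioi L, R ^ (-2 : ℝ) * h R) - h L := by
    filter_upwards [h_int, eventually_gt_atTop 0] with L hL_int hL
    exact measure_Ici_ne_top_and_mul_toReal_eq ν hfin hL hL_int
  refine tendsto_mul_toReal_measure_Ioi_of_Ici ν (h_Ici.mono fun _ hL => hL.1) ?_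
  have := ((tendsto_mul_setIntegral_Ioi_rpow_neg_two_mul hh hlim).const_mul 2).sub hlim
  rw [two_mul, add_sub_cancel_right] at this
  exact this.congr' (h_Ici.mono fun _ hL => hL.2.symm)

theorem tendsto_mul_setIntegral_norm_gt {E : Type*} [NormedAddCommGroup E] [MeasurableSpace E]
    [OpensMeasurableSpace E] (μ : Measure E) [SFinite μ] {g : E → ℝ} {c : ℝ}
    (hg : Measurable g) (hg_nonneg : ∀ ξ, 0 ≤ g ξ)
    (hint : ∀ R, IntegrableOn (fun ξ => ‖ξ‖ ^ 2 * g ξ) (ball 0 R) μ)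
    (hlim : Tendsto (fun R => (∫ ξ in ball 0 R, ‖ξ‖ ^ 2 * g ξ ∂μ) / R) atTop (𝓝 c)) :
    Tendsto (fun R => R * ∫ ξ in {ξ | R < ‖ξ‖}, g ξ ∂μ) atTop (𝓝 c) := by
  set ν : Measure ℝ := (μ.withDensity fun ξ => ENNReal.ofReal (g ξ)).map (‖·‖)
  have h_moment (R : ℝ) : truncatedSecondMoment ν R =
      ∫⁻ ξ in ball 0 R, ENNReal.ofReal (‖ξ‖ ^ 2 * g ξ) ∂μ := by
    rw [truncatedSecondMoment, setLIntegral_map measurableSet_Iio (by fun_prop) measurable_norm,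
      show (‖·‖) ⁻¹' Iio R = ball (0 : E) R by ext; simp,
      setLIntegral_withDensity_eq_setLIntegral_mul _ hg.ennreal_ofReal (by fun_prop)
        measurableSet_ball]
    refine setLIntegral_congr_fun measurableSet_ball fun ξ _ => ?_
    rw [Pi.mul_apply, ← ENNReal.ofReal_mul (hg_nonneg ξ), mul_comm]
  have h_tail (R : ℝ) : ν (Ioi R) = ∫⁻ ξ in {ξ | R < ‖ξ‖}, ENNReal.ofReal (g ξ) ∂μ := by
    rw [Measure.map_apply measurable_norm measurableSet_Ioi,
      withDensity_apply _ (measurable_norm measurableSet_Ioi)]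
    rfl
  have h_toReal {s : Set E} {f : E → ℝ} (hf : Measurable f) (hf_nonneg : ∀ ξ, 0 ≤ f ξ) :
      ∫ ξ in s, f ξ ∂μ = (∫⁻ ξ in s, ENNReal.ofReal (f ξ) ∂μ).toReal :=
    integral_eq_lintegral_of_nonneg_ae (ae_of_all _ hf_nonneg) hf.aestronglyMeasurable
  have h_prod_nonneg (ξ : E) : 0 ≤ ‖ξ‖ ^ 2 * g ξ := mul_nonneg (by positivity) (hg_nonneg ξ)
  refine (tendsto_mul_toReal_measure_Ioi ν (fun R => ?_) ?_).congr fun R => ?_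
  · rw [h_moment]
    exact (hint R).lintegral_lt_top.ne
  · simpa only [h_moment, h_toReal (by fun_prop) h_prod_nonneg] using hlim
  · rw [h_tail, h_toReal hg hg_nonneg]

-- `𝓕 f` is a Bochner integral, hence identically `0` when `f` is not integrable.
theorem Real.fourier_continuous {V E : Type*} [NormedAddCommGroup V] [InnerProductSpace ℝ V]
    [MeasurableSpace V] [BorelSpace V] [FiniteDimensional ℝ V] [NormedAddCommGroup E]
    [NormedSpace ℂ E] (f : V → E) : Continuous (𝓕 f) := by
  by_cases hf : Integrable f
  · exact VectorFourier.fourierIntegral_continuous Real.continuous_fourierChar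
      (innerSL ℝ).continuous₂ hf
  · have h_zero : 𝓕 f = 0 := funext fun w =>
      integral_undef fun h => hf ((Real.fourierIntegral_convergent_iff w).1 h)
    rw [h_zero]
    exact continuous_const

theorem fourier_tail_asymptotics_general (d : ℕ) (u : EuclideanSpace ℝ (Fin d) → ℝ)
    (J : ℝ)
    (h : Tendsto (fun R : ℝ => (2 * Real.pi ^ 2 / R) *
        ∫ ξ in ball (0 : EuclideanSpace ℝ (Fin d)) R,
          ‖ξ‖ ^ 2 * ‖𝓕 (fun x => (u x : ℂ)) ξ‖ ^ 2) atTop (𝓝 J)) :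
    Tendsto (fun R : ℝ => 2 * Real.pi ^ 2 * R *
        ∫ ξ in {ξ : EuclideanSpace ℝ (Fin d) | R < ‖ξ‖},
          ‖𝓕 (fun x => (u x : ℂ)) ξ‖ ^ 2) atTop (𝓝 J) := by
  have hπ : (2 * Real.pi ^ 2) ≠ 0 := by positivity
  have hg : Continuous fun ξ => ‖𝓕 (fun x => (u x : ℂ)) ξ‖ ^ 2 :=
    (Real.fourier_continuous _).norm.pow 2
  have h_int (R : ℝ) : IntegrableOn (fun ξ => ‖ξ‖ ^ 2 * ‖𝓕 (fun x => (u x : ℂ)) ξ‖ ^ 2)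
      (ball 0 R) :=
    ((continuous_norm.pow 2).mul hg).continuousOn.integrableOn_compact
      (isCompact_closedBall 0 R) |>.mono_set ball_subset_closedBall
  have h_tail := (tendsto_mul_setIntegral_norm_gt volume hg.measurable (fun _ => by positivity)
    h_int ((h.const_mul (2 * Real.pi ^ 2)⁻¹).congr fun R => by field_simp)).const_mul
      (2 * Real.pi ^ 2)
  rw [mul_inv_cancel_left₀ hπ] at h_tail
  exact h_tail.congr fun R => by ring

/-- If `u ∈ L²(ℝ^d)` and `J ≥ 0` satisfy
`lim_{R→∞} (2π²/R) ∫_{B_R} |ξ|² |û(ξ)|² dξ = J`, then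
`lim_{R→∞} 2π² R ∫_{|ξ|>R} |û(ξ)|² dξ = J`. -/
theorem fourier_tail_asymptotics (d : ℕ) (u : EuclideanSpace ℝ (Fin d) → ℝ)
    (hu : MemLp u 2 volume) (J : ℝ) (hJ : 0 ≤ J)
    (h : Tendsto (fun R : ℝ => (2 * Real.pi ^ 2 / R) *
        ∫ ξ in ball (0 : EuclideanSpace ℝ (Fin d)) R,
          ‖ξ‖ ^ 2 * ‖𝓕 (fun x => (u x : ℂ)) ξ‖ ^ 2) atTop (𝓝 J)) :
    Tendsto (fun R : ℝ => 2 * Real.pi ^ 2 * R *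
        ∫ ξ in {ξ : EuclideanSpace ℝ (Fin d) | R < ‖ξ‖},
          ‖𝓕 (fun x => (u x : ℂ)) ξ‖ ^ 2) atTop (𝓝 J) :=
  fourier_tail_asymptotics_general d u J h
end
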